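/- arXiv:1901.08505 — 10 statements merged into one kernel-verified Lean document; each statement's English description precedes it below -/
import Mathlib

section
/- Let η > 0 and γ ≥ 0, and let x_z : ℝ → ℝ be differentiable with |x_z'(t)| ≤ γ for all t. Let x_c : ℝ → ℝ be twice differentiable and satisfy the LIP dynamics x_c''(t) = η²(x_c(t) − x_z(t)) for all t ≥ t₀. If the initial state satisfies the stability condition x_c(t₀) + x_c'(t₀)/η = η ∫_{t₀}^∞ e^{−η(τ−t₀)} x_z(τ) dτ, then the CoM trajectory is bounded with respect to the ZMP trajectory: sup_{t ≥ t₀} |x_c(t) − x_z(t)| < ∞ (internal stability). -/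
/-!
Write `u = x_c + x_c'/η` and `s = x_c - x_c'/η`, so that `x_c = (u + s)/2`. The LIP dynamics
decouple into `u' = η (u - x_z)` and `s' = -η (s - x_z)`.

Along the unstable mode, `e^{-η(t-t₀)} u(t)` can be integrated explicitly, and the stability
condition at `t₀` propagates to every `t ≥ t₀`: `u(t)` is the mean of `x_z` over `(t, ∞)` for
the exponential density `η e^{-η(τ-t)}`. Since `x_z` is `γ`-Lipschitz, this mean is within
`γ/η` of `x_z(t)`.

Along the stable mode, `w = s - x_z` satisfies `w' = -η w - x_z'` with `|x_z'| ≤ γ`, so `|w|`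
can never cross a level `M` with `γ < η M`.
-/

open MeasureTheory Real Set Filter NNReal

lemma integral_Ioi_comp_add_right (f : ℝ → ℝ) (t : ℝ) :
    ∫ τ in Ioi t, f τ = ∫ s in Ioi 0, f (s + t) := by
  have := (measurePreserving_add_right volume t).setIntegral_preimage_emb
    (measurableEmbedding_addRight t) f (Ioi t)
  simpa using this.symm

lemma integrableOn_Ioi_comp_add_right {f : ℝ → ℝ} {t : ℝ} :
    IntegrableOn (fun s => f (s + t)) (Ioi 0) ↔ IntegrableOn f (Ioi t) := by
  have := (measurePreserving_add_right volume t).integrableOn_comp_preimage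
    (measurableEmbedding_addRight t) (f := f) (s := Ioi t)
  simpa [Function.comp_def] using this

lemma LipschitzWith.abs_apply_add_sub_apply_le {h : ℝ → ℝ} {K : ℝ≥0} (hh : LipschitzWith K h)
    {s : ℝ} (hs : 0 ≤ s) (t : ℝ) : |h (s + t) - h t| ≤ K * s := by
  simpa [Real.dist_eq, abs_of_nonneg hs] using hh.dist_le_mul (s + t) t

noncomputable def expMeanIoi (η : ℝ) (h : ℝ → ℝ) (t : ℝ) : ℝ :=
  η * ∫ τ in Ioi t, exp (-η * (τ - t)) * h τ

section ExpKernel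

variable {η : ℝ}

lemma integral_exp_neg_mul_Ioi_zero (hη : 0 < η) : ∫ s in Ioi 0, exp (-η * s) = 1 / η := by
  rw [integral_exp_mul_Ioi (neg_neg_of_pos hη)]
  simp [div_neg, neg_div]

lemma mul_exp_neg_mul_integrableOn_Ioi_zero (hη : 0 < η) :
    IntegrableOn (fun s => s * exp (-η * s)) (Ioi 0) := by
  simpa using integrableOn_rpow_mul_exp_neg_mul_rpow (s := 1) (p := 1) (by norm_num) one_pos hη

lemma integral_mul_exp_neg_mul_Ioi_zero (hη : 0 < η) :
    ∫ s in Ioi 0, s * exp (-η * s) = 1 / η ^ 2 := by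
  have := integral_rpow_mul_exp_neg_mul_Ioi (a := 2) two_pos hη
  norm_num at this
  simpa [neg_mul] using this

lemma LipschitzWith.integrableOn_exp_neg_mul_sub_mul {h : ℝ → ℝ} {K : ℝ≥0}
    (hh : LipschitzWith K h) (hη : 0 < η) (t : ℝ) :
    IntegrableOn (fun τ => exp (-η * (τ - t)) * h τ) (Ioi t) := by
  rw [← integrableOn_Ioi_comp_add_right]
  simp only [add_sub_cancel_right]
  have hdom : IntegrableOn (fun s => |h t| * exp (-η * s) + K * (s * exp (-η * s))) (Ioi 0) :=
    ((exp_neg_integrableOn_Ioi 0 hη).const_mul _).add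
      ((mul_exp_neg_mul_integrableOn_Ioi_zero hη).const_mul _)
  refine hdom.mono' ((by fun_prop : Continuous fun s => exp (-η * s)).mul
    (hh.continuous.comp (continuous_add_const t))).aestronglyMeasurable ?_
  refine (ae_restrict_iff' measurableSet_Ioi).2 (Eventually.of_forall fun s hs => ?_)
  rw [norm_mul, Real.norm_of_nonneg (exp_pos _).le, Real.norm_eq_abs]
  calc exp (-η * s) * |h (s + t)| ≤ exp (-η * s) * (|h t| + K * s) := by
        gcongr
        linarith [abs_sub_abs_le_abs_sub (h (s + t)) (h t),
          hh.abs_apply_add_sub_apply_le (le_of_lt hs) t]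
    _ = _ := by ring

lemma LipschitzWith.abs_expMeanIoi_sub_le {h : ℝ → ℝ} {K : ℝ≥0} (hh : LipschitzWith K h)
    (hη : 0 < η) (t : ℝ) : |expMeanIoi η h t - h t| ≤ K / η := by
  have hint := integrableOn_Ioi_comp_add_right.2 (hh.integrableOn_exp_neg_mul_sub_mul hη t)
  rw [expMeanIoi, integral_Ioi_comp_add_right]
  simp only [add_sub_cancel_right] at hint ⊢
  set A := ∫ s in Ioi 0, exp (-η * s) * h (s + t)
  have hconst : η * ∫ s in Ioi 0, exp (-η * s) * h t = h t := by
    rw [integral_mul_const, integral_exp_neg_mul_Ioi_zero hη]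
    field_simp
  have hdiff : A - ∫ s in Ioi 0, exp (-η * s) * h t
      = ∫ s in Ioi 0, exp (-η * s) * (h (s + t) - h t) := by
    simp only [mul_sub]
    exact (integral_sub hint ((exp_neg_integrableOn_Ioi 0 hη).mul_const _)).symm
  have hbound : ‖∫ s in Ioi 0, exp (-η * s) * (h (s + t) - h t)‖ ≤ K / η ^ 2 := by
    rw [div_eq_mul_one_div, ← integral_mul_exp_neg_mul_Ioi_zero hη, ← integral_const_mul]
    refine norm_integral_le_of_norm_le
      ((mul_exp_neg_mul_integrableOn_Ioi_zero hη).const_mul _) ?_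
    refine (ae_restrict_iff' measurableSet_Ioi).2 (Eventually.of_forall fun s hs => ?_)
    rw [norm_mul, Real.norm_of_nonneg (exp_pos _).le, Real.norm_eq_abs]
    calc exp (-η * s) * |h (s + t) - h t| ≤ exp (-η * s) * (K * s) := by
          gcongr
          exact hh.abs_apply_add_sub_apply_le (le_of_lt hs) t
      _ = _ := by ring
  calc |η * A - h t| = η * ‖A - ∫ s in Ioi 0, exp (-η * s) * h t‖ := by
        conv_lhs => rw [← hconst]
        rw [← mul_sub, abs_mul, abs_of_pos hη, Real.norm_eq_abs]
    _ ≤ η * (K / η ^ 2) := by rw [hdiff]; gcongr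
    _ = K / η := by field_simp

lemma eq_expMeanIoi_of_hasDerivAt {u h : ℝ → ℝ} {t₀ : ℝ}
    (hint : IntegrableOn (fun τ => exp (-η * (τ - t₀)) * h τ) (Ioi t₀))
    (hu : ∀ t, t₀ ≤ t → HasDerivAt u (η * (u t - h t)) t)
    (hu₀ : u t₀ = expMeanIoi η h t₀) {t : ℝ} (ht : t₀ ≤ t) :
    u t = expMeanIoi η h t := by
  set f := fun τ => exp (-η * (τ - t₀)) * h τ
  have hderiv : ∀ x ∈ uIcc t₀ t,
      HasDerivAt (fun y => exp (-η * (y - t₀)) * u y) (-η * f x) x := by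
    intro x hx
    rw [uIcc_of_le ht] at hx
    have hexp : HasDerivAt (fun y => exp (-η * (y - t₀))) (exp (-η * (x - t₀)) * -η) x := by
      simpa using (((hasDerivAt_id x).sub_const t₀).const_mul (-η)).exp
    refine (hexp.mul (hu x hx.1)).congr_deriv ?_
    simp only [f]
    ring
  have hftc := intervalIntegral.integral_eq_sub_of_hasDerivAt hderiv
    (((intervalIntegrable_iff_integrableOn_Ioc_of_le ht).2
      (hint.mono_set Ioc_subset_Ioi_self)).const_mul (-η))
  rw [intervalIntegral.integral_const_mul, ← intervalIntegral.integral_Ioi_sub_Ioi hint ht]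
    at hftc
  have hmove : exp (-η * (t - t₀)) * u t = η * ∫ τ in Ioi t, f τ := by
    simp only [sub_self, mul_zero, exp_zero, one_mul, hu₀, expMeanIoi] at hftc
    linarith
  calc u t = exp (η * (t - t₀)) * (exp (-η * (t - t₀)) * u t) := by
        rw [← mul_assoc, ← exp_add]; ring_nf; simp
    _ = η * ∫ τ in Ioi t, exp (η * (t - t₀)) * f τ := by rw [hmove, integral_const_mul]; ring
    _ = expMeanIoi η h t := by
        rw [expMeanIoi]; congr 2; ext τ; simp only [f]; rw [← mul_assoc, ← exp_add]; ring_nf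

end ExpKernel

lemma le_of_hasDerivAt_le_neg_mul_add {w w' : ℝ → ℝ} {a η γ M : ℝ}
    (hw : ∀ t, a ≤ t → HasDerivAt w (w' t) t) (hw' : ∀ t, a ≤ t → w' t ≤ -η * w t + γ)
    (ha : w a ≤ M) (hM : γ < η * M) {t : ℝ} (ht : a ≤ t) : w t ≤ M :=
  image_le_of_deriv_right_lt_deriv_boundary (B := fun _ => M)
    (fun x hx => (hw x hx.1).continuousAt.continuousWithinAt)
    (fun x hx => (hw x hx.1).hasDerivWithinAt) ha (fun _ => hasDerivAt_const _ M)
    (fun x hx hwx => by linarith [hwx ▸ hw' x hx.1]) ⟨ht, le_rfl⟩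

lemma abs_le_of_hasDerivAt_of_abs_add_mul_le {w w' : ℝ → ℝ} {a η γ M : ℝ}
    (hw : ∀ t, a ≤ t → HasDerivAt w (w' t) t) (hw' : ∀ t, a ≤ t → |w' t + η * w t| ≤ γ)
    (ha : |w a| ≤ M) (hM : γ < η * M) {t : ℝ} (ht : a ≤ t) : |w t| ≤ M := by
  refine abs_le.2 ⟨?_, le_of_hasDerivAt_le_neg_mul_add hw (fun x hx => ?_) (le_of_abs_le ha) hM ht⟩
  · have := le_of_hasDerivAt_le_neg_mul_add (w := -w) (fun x hx => (hw x hx).neg)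
      (fun x hx => ?_) ((neg_le_abs _).trans ha) hM ht
    · simp only [Pi.neg_apply] at this; linarith
    · simp only [Pi.neg_apply]; linarith [(abs_le.1 (hw' x hx)).1]
  · linarith [(abs_le.1 (hw' x hx)).2]

/-- If the LIP dynamics `x_c'' = η²(x_c − x_z)` holds for `t ≥ t₀`, the ZMP
input `x_z` has derivative bounded by `γ`, and the initial state satisfies the stability
condition `x_c(t₀) + x_c'(t₀)/η = η ∫_{t₀}^∞ e^{−η(τ−t₀)} x_z(τ) dτ`, then the CoM is
bounded with respect to the ZMP: `sup_{t ≥ t₀} |x_c(t) − x_z(t)| < ∞`. -/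
theorem stmt_0 (η γ t₀ : ℝ) (hη : 0 < η) (hγ : 0 ≤ γ)
    (xz xc : ℝ → ℝ)
    (hxz : Differentiable ℝ xz) (hxz' : ∀ t, |deriv xz t| ≤ γ)
    (hxc : Differentiable ℝ xc)
    (hode : ∀ t, t₀ ≤ t → HasDerivAt (deriv xc) (η ^ 2 * (xc t - xz t)) t)
    (hinit : xc t₀ + deriv xc t₀ / η
        = η * ∫ τ in Set.Ioi t₀, Real.exp (-η * (τ - t₀)) * xz τ) :
    ∃ M : ℝ, ∀ t, t₀ ≤ t → |xc t - xz t| ≤ M := by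
  have hlip : LipschitzWith γ.toNNReal xz := lipschitzWith_of_nnnorm_deriv_le hxz fun t =>
    (Real.le_toNNReal_iff_coe_le hγ).2 (by simpa using hxz' t)
  set u := fun t => xc t + deriv xc t / η
  set w := fun t => xc t - deriv xc t / η - xz t
  have hu : ∀ t, t₀ ≤ t → HasDerivAt u (η * (u t - xz t)) t := fun t ht =>
    ((hxc t).hasDerivAt.add ((hode t ht).div_const η)).congr_deriv
      (by simp only [u]; field_simp; ring)
  have hw : ∀ t, t₀ ≤ t → HasDerivAt w (-η * w t - deriv xz t) t := fun t ht =>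
    (((hxc t).hasDerivAt.sub ((hode t ht).div_const η)).sub (hxz t).hasDerivAt).congr_deriv
      (by simp only [w]; field_simp; ring)
  have hw' : ∀ t, t₀ ≤ t → |(-η * w t - deriv xz t) + η * w t| ≤ γ := fun t _ => by
    rw [show -η * w t - deriv xz t + η * w t = -deriv xz t by ring, abs_neg]
    exact hxz' t
  obtain ⟨M, hM₀, hM⟩ : ∃ M, |w t₀| ≤ M ∧ γ < η * M :=
    ⟨|w t₀| + (γ + 1) / η, le_add_of_nonneg_right (by positivity), by
      rw [mul_add, mul_div_cancel₀ _ hη.ne']; nlinarith [abs_nonneg (w t₀)]⟩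
  refine ⟨γ / η + M, fun t ht => ?_⟩
  have hunstable : |u t - xz t| ≤ γ / η := by
    rw [eq_expMeanIoi_of_hasDerivAt (hlip.integrableOn_exp_neg_mul_sub_mul hη t₀) hu hinit ht]
    simpa [hγ] using hlip.abs_expMeanIoi_sub_le hη t
  have hstable : |w t| ≤ M := abs_le_of_hasDerivAt_of_abs_add_mul_le hw hw' hM₀ hM ht
  have hsplit : xc t - xz t = ((u t - xz t) + w t) / 2 := by simp only [u, w]; ring
  rw [hsplit, abs_le]
  constructor <;> linarith [abs_le.1 hunstable, abs_le.1 hstable]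
end

section
/- Let η > 0 and γ ≥ 0, and let x_z : ℝ → ℝ be differentiable with |x_z'(t)| ≤ γ for all t. Let x_u : [t₀, ∞) → ℝ be differentiable and satisfy x_u'(t) = η(x_u(t) − x_z(t)) for all t ≥ t₀, with initial condition x_u(t₀) = η ∫_{t₀}^∞ e^{−η(τ−t₀)} x_z(τ) dτ. Then for every t ≥ t₀ it holds that x_u(t) = η ∫_{t}^∞ e^{−η(τ−t)} x_z(τ) dτ; i.e., the stability condition, once imposed at t₀, propagates to every later instant. -/
open MeasureTheory Real

/-!
With the integrating factor `e^{-ηt}` the equation becomes `(e^{-ηt} x_u)' = -η e^{-ηt} x_z`, so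
`e^{-ηt} x_u(t)` drops from its value at `t₀` by `η ∫_{t₀}^t e^{-ητ} x_z`, which is exactly the part
of the tail integral `η ∫_{t₀}^∞ e^{-ητ} x_z` lying before `t`. The bound on `x_z'` makes `x_z` grow
at most linearly, so all these tails converge.
-/

open Filter Asymptotics Set

lemma isBigO_atTop_id_of_abs_deriv_le {f : ℝ → ℝ} {C : ℝ} (hf : Differentiable ℝ f)
    (hC : ∀ x, |deriv f x| ≤ C) : f =O[atTop] fun x => x := by
  refine IsBigO.of_bound (|f 0| + C) ?_
  filter_upwards [eventually_ge_atTop 1] with x hx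
  have hmvt : |f x - f 0| ≤ C * |x - 0| :=
    convex_univ.norm_image_sub_le_of_norm_deriv_le (fun y _ => hf y) (fun y _ => hC y)
      (mem_univ 0) (mem_univ x)
  have hC0 : 0 ≤ C := (abs_nonneg _).trans (hC 0)
  rw [sub_zero, abs_of_pos (by linarith : 0 < x)] at hmvt
  rw [norm_eq_abs, norm_eq_abs, abs_of_pos (by linarith : 0 < x)]
  nlinarith [abs_sub_abs_le_abs_sub (f x) (f 0), abs_nonneg (f 0)]

lemma integrableOn_Ioi_exp_neg_mul_mul {f : ℝ → ℝ} {η : ℝ} (hη : 0 < η) (hf : Continuous f)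
    (hfO : f =O[atTop] fun x => x) (a : ℝ) :
    IntegrableOn (fun τ => exp (-η * τ) * f τ) (Ioi a) := by
  refine integrable_of_isBigO_exp_neg (half_pos hη) (by fun_prop) ?_
  have hfexp : f =O[atTop] fun x => exp (η / 2 * x) := by
    have hid := isLittleO_pow_exp_pos_mul_atTop 1 (half_pos hη)
    simp only [pow_one] at hid
    exact hfO.trans hid.isBigO
  refine ((isBigO_refl (fun x => exp (-η * x)) atTop).mul hfexp).congr_right fun x => ?_
  rw [← exp_add]
  ring_nf

lemma integral_exp_neg_mul_sub_mul {μ : Measure ℝ} (η t : ℝ) (g : ℝ → ℝ) :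
    ∫ τ, exp (-η * (τ - t)) * g τ ∂μ = exp (η * t) * ∫ τ, exp (-η * τ) * g τ ∂μ := by
  rw [← integral_const_mul]
  congr 1 with τ
  rw [← mul_assoc, ← exp_add]
  ring_nf

lemma exp_neg_mul_mul_sub_eq_integral {x g : ℝ → ℝ} {η t₀ t : ℝ} (hg : Continuous g)
    (hx : ∀ s, t₀ ≤ s → HasDerivAt x (η * (x s - g s)) s) (ht : t₀ ≤ t) :
    exp (-η * t) * x t - exp (-η * t₀) * x t₀ = -η * ∫ τ in t₀..t, exp (-η * τ) * g τ := by
  rw [← intervalIntegral.integral_const_mul]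
  refine (intervalIntegral.integral_eq_sub_of_hasDerivAt
    (f := fun s => exp (-η * s) * x s) (fun s hs => ?_)
    ((by fun_prop : Continuous fun τ => -η * (exp (-η * τ) * g τ)).intervalIntegrable _ _)).symm
  rw [uIcc_of_le ht] at hs
  exact (((hasDerivAt_id' s).const_mul (-η)).exp.mul (hx s hs.1)).congr_deriv (by ring)

theorem stmt_1_general (η γ t₀ : ℝ) (hη : 0 < η)
    (xz xu : ℝ → ℝ)
    (hxz : Differentiable ℝ xz) (hxz' : ∀ t, |deriv xz t| ≤ γ)
    (hode : ∀ t, t₀ ≤ t → HasDerivAt xu (η * (xu t - xz t)) t)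
    (hinit : xu t₀ = η * ∫ τ in Set.Ioi t₀, Real.exp (-η * (τ - t₀)) * xz τ) :
    ∀ t, t₀ ≤ t → xu t = η * ∫ τ in Set.Ioi t, Real.exp (-η * (τ - t)) * xz τ := by
  intro t ht
  have hint : ∀ a, IntegrableOn (fun τ => exp (-η * τ) * xz τ) (Ioi a) :=
    integrableOn_Ioi_exp_neg_mul_mul hη hxz.continuous (isBigO_atTop_id_of_abs_deriv_le hxz hxz')
  have hsplit := intervalIntegral.integral_interval_add_Ioi (hint t₀) (hint t)
  have hfactor := exp_neg_mul_mul_sub_eq_integral hxz.continuous hode ht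
  rw [integral_exp_neg_mul_sub_mul] at hinit ⊢
  have hexp_neg : ∀ s, exp (-η * s) = (exp (η * s))⁻¹ := fun s => by rw [neg_mul, exp_neg]
  rw [hexp_neg t, hexp_neg t₀, hinit] at hfactor
  -- naming the integrals keeps `field_simp` from rewriting their integrands
  set I := ∫ τ in t₀..t, exp (-η * τ) * xz τ
  set J₀ := ∫ τ in Ioi t₀, exp (-η * τ) * xz τ
  field_simp at hfactor
  linear_combination hfactor - η * exp (η * t) * hsplit

/-- If `x_u' = η(x_u − x_z)` for `t ≥ t₀`, `x_z` has derivative bounded by `γ`,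
and the stability condition `x_u(t₀) = η ∫_{t₀}^∞ e^{−η(τ−t₀)} x_z(τ) dτ` holds at `t₀`,
then it propagates: `x_u(t) = η ∫_{t}^∞ e^{−η(τ−t)} x_z(τ) dτ` for every `t ≥ t₀`. -/
theorem stmt_1 (η γ t₀ : ℝ) (hη : 0 < η) (hγ : 0 ≤ γ)
    (xz xu : ℝ → ℝ)
    (hxz : Differentiable ℝ xz) (hxz' : ∀ t, |deriv xz t| ≤ γ)
    (hode : ∀ t, t₀ ≤ t → HasDerivAt xu (η * (xu t - xz t)) t)
    (hinit : xu t₀ = η * ∫ τ in Set.Ioi t₀, Real.exp (-η * (τ - t₀)) * xz τ) :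
    ∀ t, t₀ ≤ t → xu t = η * ∫ τ in Set.Ioi t, Real.exp (-η * (τ - t)) * xz τ :=
  stmt_1_general η γ t₀ hη xz xu hxz hxz' hode hinit
end

section
/- Let η > 0 and γ ≥ 0, let x_z : ℝ → ℝ be differentiable with |x_z'(t)| ≤ γ for all t, and let c ∈ ℝ. Let x_u : [t₀, ∞) → ℝ be differentiable, satisfy x_u'(t) = η(x_u(t) − x_z(t)) for all t ≥ t₀, and have initial condition x_u(t₀) = c + η ∫_{t₀}^∞ e^{−η(τ−t₀)} x_z(τ) dτ. Then for every t ≥ t₀, x_u(t) = c·e^{η(t−t₀)} + η ∫_{t}^∞ e^{−η(τ−t)} x_z(τ) dτ. Consequently, if c ≠ 0 then |x_u(t) − x_z(t)| → ∞ as t → ∞; hence the stability condition identifies the unique initialization of x_u for which x_u − x_z remains bounded. -/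
/-!
The forward exponential average `S t = η ∫_t^∞ e^{-η(τ-t)} x_z(τ) dτ` solves the same equation
`S' = η (S - x_z)` as `x_u`, so `x_u - S` solves `y' = η y` and equals `c e^{η(t-t₀)}`.
Since `x_z` is `γ`-Lipschitz and the weights `η e^{-η(τ-t)}` on `(t, ∞)` have mass `1` and first
moment `1/η`, we get `|S - x_z| ≤ γ/η`; hence `x_u - x_z` is `c e^{η(t-t₀)}` up to a bounded
error, which diverges when `c ≠ 0`.
-/

open MeasureTheory Real Filter Set
open scoped NNReal Topology

theorem tendsto_const_mul_sub_atTop {η : ℝ} (hη : 0 < η) (t : ℝ) :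
    Tendsto (fun s => η * (s - t)) atTop atTop :=
  (tendsto_atTop_add_const_right _ (-t) tendsto_id).const_mul_atTop hη

theorem integrableOn_Ioi_and_integral_exp_neg_mul_sub {η : ℝ} (hη : 0 < η) (t : ℝ) :
    IntegrableOn (fun τ => exp (-η * (τ - t))) (Ioi t) ∧
      ∫ τ in Ioi t, exp (-η * (τ - t)) = η⁻¹ := by
  have hderiv : ∀ s ∈ Ici t, HasDerivAt (fun s => -η⁻¹ * exp (-η * (s - t)))
      (exp (-η * (s - t))) s := fun s _ => by
    refine ((((hasDerivAt_id' s).sub_const t).const_mul (-η)).exp.const_mul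
      (-η⁻¹)).congr_deriv ?_
    field_simp
  have hlim : Tendsto (fun s => -η⁻¹ * exp (-η * (s - t))) atTop (𝓝 0) := by
    simpa [neg_mul] using (tendsto_exp_neg_atTop_nhds_zero.comp
      (tendsto_const_mul_sub_atTop hη t)).const_mul (-η⁻¹)
  refine ⟨integrableOn_Ioi_deriv_of_nonneg' hderiv (fun _ _ => (exp_pos _).le) hlim, ?_⟩
  rw [integral_Ioi_of_hasDerivAt_of_nonneg' hderiv (fun _ _ => (exp_pos _).le) hlim]
  simp

theorem integrableOn_Ioi_and_integral_sub_mul_exp_neg_mul_sub {η : ℝ} (hη : 0 < η) (t : ℝ) :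
    IntegrableOn (fun τ => (τ - t) * exp (-η * (τ - t))) (Ioi t) ∧
      ∫ τ in Ioi t, (τ - t) * exp (-η * (τ - t)) = (η ^ 2)⁻¹ := by
  set F : ℝ → ℝ := fun s => -((s - t) / η + (η ^ 2)⁻¹) * exp (-η * (s - t))
  have hderiv : ∀ s ∈ Ici t, HasDerivAt F ((s - t) * exp (-η * (s - t))) s := fun s _ => by
    refine ((((hasDerivAt_id' s).sub_const t).div_const η).add_const (η ^ 2)⁻¹).neg.mul
      (((hasDerivAt_id' s).sub_const t).const_mul (-η)).exp |>.congr_deriv ?_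
    simp only [Pi.neg_apply]
    field_simp
    ring
  have hlim : Tendsto F atTop (𝓝 0) := by
    have h := ((tendsto_pow_mul_exp_neg_atTop_nhds_zero 1).add
      tendsto_exp_neg_atTop_nhds_zero).comp (tendsto_const_mul_sub_atTop hη t)
    convert h.const_mul (-(η ^ 2)⁻¹) using 1
    · ext s
      simp only [F, Function.comp, pow_one]
      field_simp
    · simp
  have hnonneg : ∀ s ∈ Ioi t, 0 ≤ (s - t) * exp (-η * (s - t)) := fun s hs =>
    mul_nonneg (sub_nonneg.2 hs.le) (exp_pos _).le
  refine ⟨integrableOn_Ioi_deriv_of_nonneg' hderiv hnonneg hlim, ?_⟩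
  rw [integral_Ioi_of_hasDerivAt_of_nonneg' hderiv hnonneg hlim]
  simp [F]

theorem hasDerivAt_integral_Ioi {E : Type*} [NormedAddCommGroup E] [NormedSpace ℝ E]
    [CompleteSpace E] {h : ℝ → E} {a t : ℝ} (hint : IntegrableOn h (Ioi a)) (hat : a < t)
    (hcont : ContinuousAt h t) :
    HasDerivAt (fun s => ∫ x in Ioi s, h x) (-h t) t := by
  have htail : (fun s => (∫ x in Ioi a, h x) - ∫ x in a..s, h x) =ᶠ[𝓝 t]
      fun s => ∫ x in Ioi s, h x := by
    filter_upwards [Ioi_mem_nhds hat] with s hs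
    rw [← intervalIntegral.integral_Ioi_sub_Ioi hint hs.le, sub_sub_cancel]
  refine ((intervalIntegral.integral_hasDerivAt_right ?_ ?_ hcont).const_sub _
    ).congr_of_eventuallyEq htail.symm
  · exact (intervalIntegrable_iff_integrableOn_Ioc_of_le hat.le).2
      (hint.mono_set Ioc_subset_Ioi_self)
  · exact AEStronglyMeasurable.stronglyMeasurableAtFilter_of_mem hint.aestronglyMeasurable
      (Ioi_mem_nhds hat)

theorem eq_mul_exp_of_hasDerivAt_mul_self {y : ℝ → ℝ} {η t₀ : ℝ}
    (hy : ∀ t, t₀ ≤ t → HasDerivAt y (η * y t) t) {t : ℝ} (ht : t₀ ≤ t) :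
    y t = y t₀ * exp (η * (t - t₀)) := by
  set z : ℝ → ℝ := fun s => exp (-η * (s - t₀)) * y s
  have hz : ∀ s, t₀ ≤ s → HasDerivAt z 0 s := fun s hs => by
    refine ((((hasDerivAt_id' s).sub_const t₀).const_mul (-η)).exp.mul (hy s hs)).congr_deriv ?_
    ring
  have hconst := constant_of_has_deriv_right_zero
    (fun s hs => (hz s hs.1).continuousAt.continuousWithinAt)
    (fun s hs => (hz s hs.1).hasDerivWithinAt) t ⟨ht, le_rfl⟩
  have hexp : exp (-η * (t - t₀)) * exp (η * (t - t₀)) = 1 := by rw [← exp_add]; simp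
  simp only [z, sub_self, mul_zero, exp_zero, one_mul] at hconst
  linear_combination exp (η * (t - t₀)) * hconst - y t * hexp

theorem tendsto_abs_mul_exp_add_atTop {c η t₀ M : ℝ} {g : ℝ → ℝ} (hc : c ≠ 0)
    (hη : 0 < η) (hg : ∀ t, |g t| ≤ M) :
    Tendsto (fun t => |c * exp (η * (t - t₀)) + g t|) atTop atTop := by
  refine tendsto_atTop_mono (fun t => ?_) (tendsto_atTop_add_const_right _ (-M)
    ((tendsto_exp_atTop.comp (tendsto_const_mul_sub_atTop hη t₀)).const_mul_atTop
      (abs_pos.2 hc)))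
  have := abs_sub_abs_le_abs_add (c * exp (η * (t - t₀))) (g t)
  rw [abs_mul, abs_of_pos (exp_pos _)] at this
  simp only [Function.comp_apply]
  linarith [hg t]

theorem LipschitzWith.abs_sub_le_of_le {K : ℝ≥0} {f : ℝ → ℝ} (hf : LipschitzWith K f)
    {t τ : ℝ} (h : t ≤ τ) : |f τ - f t| ≤ K * (τ - t) := by
  simpa [Real.dist_eq, abs_of_nonneg (sub_nonneg.2 h)] using hf.dist_le_mul τ t

theorem LipschitzWith.integrableOn_exp_neg_mul_sub_mul_Ioi {K : ℝ≥0} {f : ℝ → ℝ}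
    (hf : LipschitzWith K f) {η : ℝ} (hη : 0 < η) (t : ℝ) :
    IntegrableOn (fun τ => exp (-η * (τ - t)) * f τ) (Ioi t) := by
  have hmajorant := ((integrableOn_Ioi_and_integral_exp_neg_mul_sub hη t).1.const_mul |f t|).add
    ((integrableOn_Ioi_and_integral_sub_mul_exp_neg_mul_sub hη t).1.const_mul K)
  have hcont : Continuous fun τ => exp (-η * (τ - t)) * f τ := by
    have := hf.continuous
    fun_prop
  refine hmajorant.mono' hcont.aestronglyMeasurable ?_
  filter_upwards [ae_restrict_mem measurableSet_Ioi] with τ hτ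
  have hgrowth : |f τ| ≤ |f t| + K * (τ - t) := by
    linarith [abs_sub_abs_le_abs_sub (f τ) (f t), hf.abs_sub_le_of_le hτ.le]
  rw [Pi.add_apply, Real.norm_eq_abs, abs_mul, abs_of_pos (exp_pos _)]
  nlinarith [exp_pos (-η * (τ - t))]

noncomputable def forwardExpAverage (η : ℝ) (f : ℝ → ℝ) (t : ℝ) : ℝ :=
  η * ∫ τ in Ioi t, exp (-η * (τ - t)) * f τ

theorem forwardExpAverage_eq_mul_exp (η : ℝ) (f : ℝ → ℝ) :
    forwardExpAverage η f =
      fun t => η * exp (η * t) * ∫ τ in Ioi t, exp (-η * τ) * f τ := by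
  funext t
  rw [forwardExpAverage, mul_assoc, ← integral_const_mul (exp (η * t))]
  congr 1
  refine setIntegral_congr_fun measurableSet_Ioi fun (τ : ℝ) _ => ?_
  rw [← mul_assoc, ← exp_add]
  ring_nf

theorem hasDerivAt_forwardExpAverage {η : ℝ} {f : ℝ → ℝ} (hf : Continuous f)
    (hint : ∀ s, IntegrableOn (fun τ => exp (-η * (τ - s)) * f τ) (Ioi s)) (t : ℝ) :
    HasDerivAt (forwardExpAverage η f) (η * (forwardExpAverage η f t - f t)) t := by
  have hint' : IntegrableOn (fun τ => exp (-η * τ) * f τ) (Ioi (t - 1)) := by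
    refine IntegrableOn.congr_fun ((hint (t - 1)).const_mul (exp (-η * (t - 1))))
      (fun τ _ => ?_) measurableSet_Ioi
    rw [← mul_assoc, ← exp_add]
    ring_nf
  have hI := hasDerivAt_integral_Ioi hint' (by linarith) (by fun_prop)
  rw [forwardExpAverage_eq_mul_exp]
  refine ((((hasDerivAt_id' t).const_mul η).exp.const_mul η).mul hI).congr_deriv ?_
  have hexp : exp (η * t) * exp (-η * t) = 1 := by rw [← exp_add]; simp
  linear_combination (-η * f t) * hexp

theorem LipschitzWith.abs_forwardExpAverage_sub_le {K : ℝ≥0} {f : ℝ → ℝ}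
    (hf : LipschitzWith K f) {η : ℝ} (hη : 0 < η) (t : ℝ) :
    |forwardExpAverage η f t - f t| ≤ K / η := by
  obtain ⟨hexp, hexp_eq⟩ := integrableOn_Ioi_and_integral_exp_neg_mul_sub hη t
  obtain ⟨hmom, hmom_eq⟩ := integrableOn_Ioi_and_integral_sub_mul_exp_neg_mul_sub hη t
  have hrepr : forwardExpAverage η f t - f t =
      η * ∫ τ in Ioi t, exp (-η * (τ - t)) * (f τ - f t) := by
    have hsplit : ∫ τ in Ioi t, exp (-η * (τ - t)) * (f τ - f t) =
        (∫ τ in Ioi t, exp (-η * (τ - t)) * f τ) -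
          (∫ τ in Ioi t, exp (-η * (τ - t))) * f t := by
      rw [← integral_mul_const,
        ← integral_sub (hf.integrableOn_exp_neg_mul_sub_mul_Ioi hη t) (hexp.mul_const _)]
      simp only [mul_sub]
    rw [hsplit, hexp_eq, forwardExpAverage]
    field_simp
  have hbound : ‖∫ τ in Ioi t, exp (-η * (τ - t)) * (f τ - f t)‖ ≤
      ∫ τ in Ioi t, K * ((τ - t) * exp (-η * (τ - t))) := by
    refine norm_integral_le_of_norm_le (hmom.const_mul _) ?_
    filter_upwards [ae_restrict_mem measurableSet_Ioi] with τ hτ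
    rw [Real.norm_eq_abs, abs_mul, abs_of_pos (exp_pos _)]
    nlinarith [exp_pos (-η * (τ - t)), hf.abs_sub_le_of_le hτ.le]
  rw [integral_const_mul, hmom_eq] at hbound
  calc |forwardExpAverage η f t - f t|
      = η * ‖∫ τ in Ioi t, exp (-η * (τ - t)) * (f τ - f t)‖ := by
        rw [hrepr, abs_mul, abs_of_pos hη, Real.norm_eq_abs]
    _ ≤ η * (K * (η ^ 2)⁻¹) := by gcongr
    _ = K / η := by field_simp

theorem stmt_3_general (η γ t₀ c : ℝ) (hη : 0 < η)
    (xz xu : ℝ → ℝ)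
    (hxz : Differentiable ℝ xz) (hxz' : ∀ t, |deriv xz t| ≤ γ)
    (hode : ∀ t, t₀ ≤ t → HasDerivAt xu (η * (xu t - xz t)) t)
    (hinit : xu t₀ = c + η * ∫ τ in Set.Ioi t₀, Real.exp (-η * (τ - t₀)) * xz τ) :
    (∀ t, t₀ ≤ t →
      xu t = c * Real.exp (η * (t - t₀))
        + η * ∫ τ in Set.Ioi t, Real.exp (-η * (τ - t)) * xz τ) ∧
    (c ≠ 0 → Tendsto (fun t => |xu t - xz t|) atTop atTop) := by
  have hlip : LipschitzWith γ.toNNReal xz :=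
    lipschitzWith_of_nnnorm_deriv_le hxz fun t =>
      NNReal.coe_le_coe.1 <| by simp [hxz' t]
  have hS : ∀ t, HasDerivAt (forwardExpAverage η xz)
      (η * (forwardExpAverage η xz t - xz t)) t :=
    hasDerivAt_forwardExpAverage hlip.continuous (hlip.integrableOn_exp_neg_mul_sub_mul_Ioi hη)
  have hsol : ∀ t, t₀ ≤ t → xu t = c * exp (η * (t - t₀)) + forwardExpAverage η xz t := by
    intro t ht
    have hy := eq_mul_exp_of_hasDerivAt_mul_self (y := xu - forwardExpAverage η xz)
      (fun s hs => ((hode s hs).sub (hS s)).congr_deriv (by simp only [Pi.sub_apply]; ring)) ht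
    simp only [Pi.sub_apply, forwardExpAverage, hinit, add_sub_cancel_right] at hy ⊢
    linarith
  refine ⟨hsol, fun hc => ?_⟩
  refine (tendsto_abs_mul_exp_add_atTop (t₀ := t₀) hc hη
    (hlip.abs_forwardExpAverage_sub_le hη)).congr' ?_
  filter_upwards [eventually_ge_atTop t₀] with t ht
  rw [hsol t ht, add_sub_assoc]

/-- If `x_u' = η(x_u − x_z)` for `t ≥ t₀` with
`x_u(t₀) = c + η ∫_{t₀}^∞ e^{−η(τ−t₀)} x_z(τ) dτ`, then
`x_u(t) = c·e^{η(t−t₀)} + η ∫_{t}^∞ e^{−η(τ−t)} x_z(τ) dτ` for all `t ≥ t₀`; consequently,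
if `c ≠ 0` then `|x_u − x_z| → ∞` as `t → ∞`. -/
theorem stmt_3 (η γ t₀ c : ℝ) (hη : 0 < η) (hγ : 0 ≤ γ)
    (xz xu : ℝ → ℝ)
    (hxz : Differentiable ℝ xz) (hxz' : ∀ t, |deriv xz t| ≤ γ)
    (hode : ∀ t, t₀ ≤ t → HasDerivAt xu (η * (xu t - xz t)) t)
    (hinit : xu t₀ = c + η * ∫ τ in Set.Ioi t₀, Real.exp (-η * (τ - t₀)) * xz τ) :
    (∀ t, t₀ ≤ t →
      xu t = c * Real.exp (η * (t - t₀))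
        + η * ∫ τ in Set.Ioi t, Real.exp (-η * (τ - t)) * xz τ) ∧
    (c ≠ 0 → Tendsto (fun t => |xu t - xz t|) atTop atTop) :=
  stmt_3_general η γ t₀ c hη xz xu hxz hxz' hode hinit
end

section
/- Let η > 0, γ ≥ 0, and let x_z : ℝ → ℝ be differentiable with |x_z'(t)| ≤ γ for all t. Suppose x_u : ℝ → ℝ is differentiable, satisfies x_u'(t) = η(x_u(t) − x_z(t)) for all t, and the function x_u − x_z is bounded on [t₀, ∞). Then necessarily x_u(t₀) = η ∫_{t₀}^∞ e^{−η(τ−t₀)} x_z(τ) dτ. Combined with the converse (boundedness under the stability condition), x_u − x_z is bounded on [t₀, ∞) if and only if x_u(t₀) = η ∫_{t₀}^∞ e^{−η(τ−t₀)} x_z(τ) dτ. -/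
/-!
Multiplying the equation by `e^{-η(t-t₀)}` shows that along solutions the quantity
`D t = e^{-η(t-t₀)} x_u(t) - η ∫_t^∞ e^{-η(τ-t₀)} x_z(τ) dτ` is constant, and `D t = 0` is exactly
the stability condition at time `t`. Since `x_z` is `γ`-Lipschitz, boundedness of `x_u - x_z`
makes `x_u` grow at most linearly, so `D t → 0` as `t → ∞` and hence `D t₀ = 0`. Conversely, if
`D t₀ = 0` then the condition holds at every `t`, which writes `x_u(t) - x_z(t)` as
`η ∫_t^∞ e^{-η(τ-t)} (x_z(τ) - x_z(t)) dτ`, of size at most `4γ/η`.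
-/

open MeasureTheory Real Set Filter Topology NNReal

lemma mul_exp_neg_mul_le {b : ℝ} (hb : 0 < b) (s : ℝ) :
    s * exp (-b * s) ≤ 2 / b * exp (-(b / 2) * s) := by
  have hlin : b / 2 * s ≤ exp (b / 2 * s) := by linarith [add_one_le_exp (b / 2 * s)]
  have hsplit : exp (-b * s) = exp (-(b / 2) * s) * exp (-(b / 2) * s) := by
    rw [← exp_add]; ring_nf
  have hcancel : exp (b / 2 * s) * exp (-(b / 2) * s) = 1 := by
    rw [← exp_add]; ring_nf; exact exp_zero
  calc s * exp (-b * s) = 2 / b * (b / 2 * s * exp (-(b / 2) * s)) * exp (-(b / 2) * s) := by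
        rw [hsplit]; field_simp
    _ ≤ 2 / b * (exp (b / 2 * s) * exp (-(b / 2) * s)) * exp (-(b / 2) * s) := by gcongr
    _ = 2 / b * exp (-(b / 2) * s) := by rw [hcancel, mul_one]

lemma integrableOn_Ioi_exp_neg_mul_sub {b : ℝ} (hb : 0 < b) (t : ℝ) :
    IntegrableOn (fun τ => exp (-b * (τ - t))) (Ioi t) := by
  refine IntegrableOn.congr_fun ((integrableOn_exp_mul_Ioi (neg_lt_zero.2 hb) t).mul_const
    (exp (b * t))) (fun τ _ => ?_) measurableSet_Ioi
  rw [← exp_add]; ring_nf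

lemma integral_Ioi_exp_neg_mul_sub {b : ℝ} (hb : 0 < b) (t : ℝ) :
    ∫ τ in Ioi t, exp (-b * (τ - t)) = b⁻¹ := by
  simp_rw [mul_sub, sub_eq_add_neg, exp_add, integral_mul_const,
    integral_exp_mul_Ioi (neg_lt_zero.2 hb) t, neg_div_neg_eq, div_mul_eq_mul_div, ← exp_add]
  simp

namespace LipschitzWith

variable {K : ℝ≥0} {f : ℝ → ℝ} {b t τ : ℝ}

lemma abs_sub_le_of_le_s4 (hf : LipschitzWith K f) (h : t ≤ τ) : |f τ - f t| ≤ K * (τ - t) := by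
  simpa [Real.dist_eq, abs_of_nonneg (sub_nonneg.2 h)] using hf.dist_le_mul τ t

lemma norm_exp_mul_sub_le (hf : LipschitzWith K f) (hb : 0 < b) (h : t ≤ τ) :
    ‖exp (-b * (τ - t)) * (f τ - f t)‖ ≤ 2 * K / b * exp (-(b / 2) * (τ - t)) := by
  rw [norm_mul, norm_of_nonneg (exp_pos _).le, Real.norm_eq_abs]
  calc exp (-b * (τ - t)) * |f τ - f t| ≤ exp (-b * (τ - t)) * (K * (τ - t)) := by
        gcongr; exact hf.abs_sub_le_of_le_s4 h
    _ = K * ((τ - t) * exp (-b * (τ - t))) := by ring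
    _ ≤ K * (2 / b * exp (-(b / 2) * (τ - t))) := by gcongr ?_ * ?_; exact mul_exp_neg_mul_le hb _
    _ = 2 * K / b * exp (-(b / 2) * (τ - t)) := by ring

lemma integrableOn_exp_mul_sub (hf : LipschitzWith K f) (hb : 0 < b) (t : ℝ) :
    IntegrableOn (fun τ => exp (-b * (τ - t)) * (f τ - f t)) (Ioi t) := by
  have := hf.continuous
  refine Integrable.mono' ((integrableOn_Ioi_exp_neg_mul_sub (half_pos hb) t).const_mul
    (2 * K / b)) (by fun_prop : Continuous _).aestronglyMeasurable ?_
  filter_upwards [ae_restrict_mem measurableSet_Ioi] with τ hτ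
  exact hf.norm_exp_mul_sub_le hb (le_of_lt hτ)

lemma integrableOn_exp_mul (hf : LipschitzWith K f) (hb : 0 < b) (s t : ℝ) :
    IntegrableOn (fun τ => exp (-b * (τ - s)) * f τ) (Ioi t) := by
  have hbase : IntegrableOn (fun τ => exp (-b * (τ - t)) * f τ) (Ioi t) := by
    refine IntegrableOn.congr_fun ((hf.integrableOn_exp_mul_sub hb t).add
      ((integrableOn_Ioi_exp_neg_mul_sub hb t).mul_const (f t))) (fun τ _ => ?_) measurableSet_Ioi
    simp only [Pi.add_apply]; ring
  refine IntegrableOn.congr_fun (hbase.const_mul (exp (-b * (t - s)))) (fun τ _ => ?_)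
    measurableSet_Ioi
  rw [← mul_assoc, ← exp_add]; ring_nf

lemma abs_sub_le_of_eq_integral (hf : LipschitzWith K f) (hb : 0 < b) {x : ℝ}
    (hx : x = b * ∫ τ in Ioi t, exp (-b * (τ - t)) * f τ) : |x - f t| ≤ 4 * K / b := by
  have hft : f t = b * ∫ τ in Ioi t, exp (-b * (τ - t)) * f t := by
    rw [integral_mul_const, integral_Ioi_exp_neg_mul_sub hb, ← mul_assoc, mul_inv_cancel₀ hb.ne',
      one_mul]
  have hdiff : x - f t = b * ∫ τ in Ioi t, exp (-b * (τ - t)) * (f τ - f t) := by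
    have hsplit : ∫ τ in Ioi t, exp (-b * (τ - t)) * (f τ - f t) =
        (∫ τ in Ioi t, exp (-b * (τ - t)) * f τ) - ∫ τ in Ioi t, exp (-b * (τ - t)) * f t := by
      rw [← integral_sub (hf.integrableOn_exp_mul hb t t)
        ((integrableOn_Ioi_exp_neg_mul_sub hb t).mul_const (f t))]
      congr 1; ext τ; ring
    rw [hsplit, mul_sub, ← hx, ← hft]
  have hbound : ‖∫ τ in Ioi t, exp (-b * (τ - t)) * (f τ - f t)‖ ≤ 4 * K / b ^ 2 := by
    calc _ ≤ ∫ τ in Ioi t, 2 * K / b * exp (-(b / 2) * (τ - t)) := by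
          refine norm_integral_le_of_norm_le
            ((integrableOn_Ioi_exp_neg_mul_sub (half_pos hb) t).const_mul _) ?_
          filter_upwards [ae_restrict_mem measurableSet_Ioi] with τ hτ
          exact hf.norm_exp_mul_sub_le hb (le_of_lt hτ)
      _ = 4 * K / b ^ 2 := by
          rw [integral_const_mul, integral_Ioi_exp_neg_mul_sub (half_pos hb)]; field_simp; ring
  rw [hdiff, abs_mul, abs_of_pos hb, ← Real.norm_eq_abs]
  calc b * ‖_‖ ≤ b * (4 * K / b ^ 2) := by gcongr
    _ = 4 * K / b := by field_simp

end LipschitzWith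

lemma tendsto_setIntegral_Ioi_atTop {f : ℝ → ℝ} {a : ℝ} (hf : IntegrableOn f (Ioi a)) :
    Tendsto (fun t => ∫ x in Ioi t, f x) atTop (𝓝 0) := by
  have hlim := (intervalIntegral_tendsto_integral_Ioi a hf tendsto_id).const_sub (∫ x in Ioi a, f x)
  rw [sub_self] at hlim
  refine hlim.congr' ?_
  filter_upwards [eventually_ge_atTop a] with t ht
  rw [id, ← intervalIntegral.integral_Ioi_sub_Ioi hf ht, sub_sub_cancel]

lemma tendsto_mul_exp_neg_mul_atTop {η : ℝ} (hη : 0 < η) (C D t₀ : ℝ) :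
    Tendsto (fun t => (C + D * (t - t₀)) * exp (-η * (t - t₀))) atTop (𝓝 0) := by
  have hshift : Tendsto (fun t : ℝ => t - t₀) atTop atTop := by
    simpa [sub_eq_add_neg] using tendsto_atTop_add_const_right atTop (-t₀) tendsto_id
  have h0 := (tendsto_rpow_mul_exp_neg_mul_atTop_nhds_zero 0 η hη).comp hshift
  have h1 := (tendsto_rpow_mul_exp_neg_mul_atTop_nhds_zero 1 η hη).comp hshift
  simp only [Function.comp_def, Real.rpow_zero, one_mul, Real.rpow_one] at h0 h1
  simpa [add_mul, mul_assoc] using (h0.const_mul C).add (h1.const_mul D)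

section StabilityCondition

variable {η t₀ : ℝ} {u z : ℝ → ℝ}

/-- Equal to `e^{-η(t-t₀)} (u t - η ∫_t^∞ e^{-η(τ-t)} z τ dτ)`; anchoring the weight at `t₀`
rather than at `t` is what makes it constant along solutions of `u' = η (u - z)`. -/
noncomputable def stabilityDefect (η t₀ : ℝ) (u z : ℝ → ℝ) (t : ℝ) : ℝ :=
  exp (-η * (t - t₀)) * u t - η * ∫ τ in Ioi t, exp (-η * (τ - t₀)) * z τ

lemma stabilityDefect_eq_zero_iff (t : ℝ) :
    stabilityDefect η t₀ u z t = 0 ↔ u t = η * ∫ τ in Ioi t, exp (-η * (τ - t)) * z τ := by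
  have hreweight : ∫ τ in Ioi t, exp (-η * (τ - t₀)) * z τ =
      exp (-η * (t - t₀)) * ∫ τ in Ioi t, exp (-η * (τ - t)) * z τ := by
    rw [← integral_const_mul]; congr 1; ext τ; rw [← mul_assoc, ← exp_add]; ring_nf
  rw [stabilityDefect, hreweight, mul_left_comm η, ← mul_sub, mul_eq_zero,
    or_iff_right (exp_pos _).ne', sub_eq_zero]

lemma hasDerivAt_exp_mul (hode : ∀ t, HasDerivAt u (η * (u t - z t)) t) (t : ℝ) :
    HasDerivAt (fun τ => exp (-η * (τ - t₀)) * u τ) (-η * (exp (-η * (t - t₀)) * z t)) t := by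
  have hexp : HasDerivAt (fun τ => exp (-η * (τ - t₀))) (exp (-η * (t - t₀)) * -η) t := by
    simpa using (((hasDerivAt_id t).sub_const t₀).const_mul (-η)).exp
  exact (hexp.mul (hode t)).congr_deriv (by ring)

lemma stabilityDefect_eq (hode : ∀ t, HasDerivAt u (η * (u t - z t)) t)
    (hint : ∀ t, IntegrableOn (fun τ => exp (-η * (τ - t₀)) * z τ) (Ioi t)) (a b : ℝ) :
    stabilityDefect η t₀ u z a = stabilityDefect η t₀ u z b := by
  have hftc := intervalIntegral.integral_eq_sub_of_hasDerivAt
    (fun t _ => hasDerivAt_exp_mul (t₀ := t₀) hode t)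
    ((intervalIntegrable_iff.2 ((hint (min a b)).mono_set Ioc_subset_Ioi_self)).const_mul (-η))
  rw [intervalIntegral.integral_const_mul,
    ← intervalIntegral.integral_Ioi_sub_Ioi' (hint a) (hint b)] at hftc
  simp only [stabilityDefect]
  linarith

lemma tendsto_stabilityDefect_atTop
    (hint : IntegrableOn (fun τ => exp (-η * (τ - t₀)) * z τ) (Ioi t₀))
    (hdecay : Tendsto (fun t => exp (-η * (t - t₀)) * u t) atTop (𝓝 0)) :
    Tendsto (stabilityDefect η t₀ u z) atTop (𝓝 0) := by
  have := hdecay.sub ((tendsto_setIntegral_Ioi_atTop hint).const_mul η)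
  rwa [mul_zero, sub_zero] at this

lemma tendsto_exp_mul_atTop_of_bounded {K : ℝ≥0} (hz : LipschitzWith K z) (hη : 0 < η) {M : ℝ}
    (hM : ∀ t, t₀ ≤ t → |u t - z t| ≤ M) :
    Tendsto (fun t => exp (-η * (t - t₀)) * u t) atTop (𝓝 0) := by
  refine squeeze_zero_norm' ?_ (tendsto_mul_exp_neg_mul_atTop hη (M + |z t₀|) K t₀)
  filter_upwards [eventually_ge_atTop t₀] with t ht
  have hu : |u t| ≤ M + |z t₀| + K * (t - t₀) := by
    have := hz.abs_sub_le_of_le_s4 ht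
    calc |u t| = |(u t - z t) + (z t - z t₀) + z t₀| := by ring_nf
      _ ≤ |u t - z t| + |z t - z t₀| + |z t₀| := abs_add_three _ _ _
      _ ≤ M + |z t₀| + K * (t - t₀) := by linarith [hM t ht]
  rw [norm_mul, norm_of_nonneg (exp_pos _).le, Real.norm_eq_abs, mul_comm]
  gcongr

end StabilityCondition

theorem stmt_4_general (η γ t₀ : ℝ) (hη : 0 < η)
    (xz xu : ℝ → ℝ)
    (hxz : Differentiable ℝ xz) (hxz' : ∀ t, |deriv xz t| ≤ γ)
    (hode : ∀ t, HasDerivAt xu (η * (xu t - xz t)) t) :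
    (∃ M : ℝ, ∀ t, t₀ ≤ t → |xu t - xz t| ≤ M) ↔
      xu t₀ = η * ∫ τ in Set.Ioi t₀, Real.exp (-η * (τ - t₀)) * xz τ := by
  have hlip : LipschitzWith γ.toNNReal xz := lipschitzWith_of_nnnorm_deriv_le hxz fun t => by
    simpa [← NNReal.coe_le_coe] using (hxz' t).trans (le_max_left γ 0)
  have hint := hlip.integrableOn_exp_mul hη t₀
  have hconst := stabilityDefect_eq hode hint
  rw [← stabilityDefect_eq_zero_iff (t₀ := t₀)]
  constructor
  · rintro ⟨M, hM⟩
    exact tendsto_nhds_unique (tendsto_const_nhds.congr (hconst t₀))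
      (tendsto_stabilityDefect_atTop (hint t₀) (tendsto_exp_mul_atTop_of_bounded hlip hη hM))
  · intro h
    refine ⟨4 * γ.toNNReal / η, fun t _ => hlip.abs_sub_le_of_eq_integral hη ?_⟩
    rw [← stabilityDefect_eq_zero_iff, ← hconst t₀, h]

/-- If `x_u' = η(x_u − x_z)` everywhere and `x_z` has derivative bounded by `γ`,
then `x_u − x_z` is bounded on `[t₀, ∞)` if and only if the stability condition
`x_u(t₀) = η ∫_{t₀}^∞ e^{−η(τ−t₀)} x_z(τ) dτ` holds. -/
theorem stmt_4 (η γ t₀ : ℝ) (hη : 0 < η) (hγ : 0 ≤ γ)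
    (xz xu : ℝ → ℝ)
    (hxz : Differentiable ℝ xz) (hxz' : ∀ t, |deriv xz t| ≤ γ)
    (hxu : Differentiable ℝ xu)
    (hode : ∀ t, HasDerivAt xu (η * (xu t - xz t)) t) :
    (∃ M : ℝ, ∀ t, t₀ ≤ t → |xu t - xz t| ≤ M) ↔
      xu t₀ = η * ∫ τ in Set.Ioi t₀, Real.exp (-η * (τ - t₀)) * xz τ :=
  stmt_4_general η γ t₀ hη xz xu hxz hxz' hode
end

section
/- (Proposition 1, stability condition form) Let η > 0, δ > 0, γ ≥ 0, t_k ∈ ℝ, x_z^k ∈ ℝ, and let (v_i)_{i≥0} be a sequence of reals with |v_i| ≤ γ for all i. Define the piecewise-linear ZMP trajectory x_z(t) = x_z^k + Σ_{i=0}^∞ (ρ(t − t_{k+i}) − ρ(t − t_{k+i+1})) v_i, where ρ(t) = max(t,0) and t_{k+i} = t_k + iδ. Then η ∫_{t_k}^∞ e^{−η(τ−t_k)} x_z(τ) dτ = x_z^k + ((1 − e^{−ηδ})/η) · Σ_{i=0}^∞ e^{−iηδ} v_i. -/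
/-!
Each summand of `x_z` is a clipped ramp `ρ(τ - c) - ρ(τ - d)`. An explicit antiderivative shows
that the ramp `ρ(τ - c)`, `c ≥ t_k`, has weighted integral `e^{-η(c - t_k)} / η²`, so the `i`-th
summand contributes `(1 - e^{-ηδ}) e^{-iηδ} v_i / η²`. These contributions are absolutely summable
because `v` is bounded and `e^{-iηδ}` is geometric, which justifies integrating term by term.
-/

open MeasureTheory Real Set Filter Topology
open scoped ENNReal

theorem integrable_tsum_of_summable_integral_norm {α E : Type*} [MeasurableSpace α] {μ : Measure α}
    [NormedAddCommGroup E] [CompleteSpace E] {F : ℕ → α → E}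
    (hF_int : ∀ i, Integrable (F i) μ) (hF_sum : Summable fun i ↦ ∫ a, ‖F i a‖ ∂μ) :
    Integrable (fun a ↦ ∑' i, F i a) μ := by
  have hmeas (i : ℕ) : AEMeasurable (fun a ↦ ‖F i a‖ₑ) μ := (hF_int i).1.enorm
  have hfin : ∫⁻ a, ∑' i, ‖F i a‖ₑ ∂μ < ∞ := by
    rw [lintegral_tsum hmeas, ← funext fun i ↦ ofReal_integral_norm_eq_lintegral_enorm (hF_int i),
      ← ENNReal.ofReal_tsum_of_nonneg (fun i ↦ integral_nonneg fun a ↦ norm_nonneg _) hF_sum]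
    exact ENNReal.ofReal_lt_top
  have hsum : ∀ᵐ a ∂μ, Summable fun i ↦ F i a := by
    filter_upwards [ae_lt_top' (AEMeasurable.tsum hmeas) hfin.ne] with a ha
    exact (tsum_enorm_ne_top_iff_summable_norm.1 ha.ne).of_norm
  refine ⟨aestronglyMeasurable_of_tendsto_ae atTop
    (fun n ↦ Finset.aestronglyMeasurable_fun_sum (Finset.range n) fun i _ ↦ (hF_int i).1)
    (hsum.mono fun a ha ↦ ha.hasSum.tendsto_sum_nat), ?_⟩
  exact (lintegral_mono fun a ↦ enorm_tsum_le_tsum_enorm).trans_lt hfin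

section
variable {η : ℝ}

theorem hasDerivAt_neg_exp_neg_mul_mul_affine (hη : η ≠ 0) (a c x : ℝ) :
    HasDerivAt (fun τ ↦ -(exp (-η * (τ - a)) * ((τ - c) / η + 1 / η ^ 2)))
      (exp (-η * (x - a)) * (x - c)) x := by
  have hlin : HasDerivAt (fun τ ↦ -η * (τ - a)) (-η) x := by
    simpa using ((hasDerivAt_id x).sub_const a).const_mul (-η)
  have haff : HasDerivAt (fun τ ↦ (τ - c) / η + 1 / η ^ 2) (1 / η) x :=
    (((hasDerivAt_id x).sub_const c).div_const η).add_const _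
  exact (hlin.exp.mul haff).neg.congr_deriv (by field_simp; ring)

theorem tendsto_neg_exp_neg_mul_mul_affine_atTop (hη : 0 < η) (a c : ℝ) :
    Tendsto (fun τ ↦ -(exp (-η * (τ - a)) * ((τ - c) / η + 1 / η ^ 2))) atTop (𝓝 0) := by
  have hlin : Tendsto (fun τ ↦ τ * exp (-η * τ)) atTop (𝓝 0) := by
    simpa using tendsto_rpow_mul_exp_neg_mul_atTop_nhds_zero 1 η hη
  have hconst : Tendsto (fun τ ↦ exp (-η * τ)) atTop (𝓝 0) :=
    tendsto_exp_neg_atTop_nhds_zero.comp (tendsto_id.const_mul_atTop hη) |>.congr fun τ ↦ by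
      simp [neg_mul]
  have := ((hlin.const_mul (exp (η * a) / η)).add
    (hconst.const_mul (exp (η * a) * (1 / η ^ 2 - c / η)))).neg
  simp only [mul_zero, add_zero, neg_zero] at this
  refine this.congr fun τ ↦ ?_
  rw [show -η * (τ - a) = η * a + -η * τ by ring, exp_add]
  ring

theorem integrableOn_exp_neg_mul_mul_sub_Ioi (hη : 0 < η) (a c : ℝ) :
    IntegrableOn (fun τ ↦ exp (-η * (τ - a)) * (τ - c)) (Ioi c) :=
  integrableOn_Ioi_deriv_of_nonneg' (fun x _ ↦ hasDerivAt_neg_exp_neg_mul_mul_affine hη.ne' a c x)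
    (fun _ hx ↦ mul_nonneg (exp_pos _).le (sub_nonneg.2 (le_of_lt hx)))
    (tendsto_neg_exp_neg_mul_mul_affine_atTop hη a c)

theorem integral_exp_neg_mul_mul_sub_Ioi (hη : 0 < η) (a c : ℝ) :
    ∫ τ in Ioi c, exp (-η * (τ - a)) * (τ - c) = exp (-η * (c - a)) / η ^ 2 := by
  rw [integral_Ioi_of_hasDerivAt_of_nonneg'
    (fun x _ ↦ hasDerivAt_neg_exp_neg_mul_mul_affine hη.ne' a c x)
    (fun _ hx ↦ mul_nonneg (exp_pos _).le (sub_nonneg.2 (le_of_lt hx)))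
    (tendsto_neg_exp_neg_mul_mul_affine_atTop hη a c)]
  field_simp
  ring

theorem mul_max_sub_zero_eq_indicator (g : ℝ → ℝ) (c : ℝ) :
    (fun τ ↦ g τ * max (τ - c) 0) = (Ioi c).indicator fun τ ↦ g τ * (τ - c) := by
  ext τ
  by_cases hτ : c < τ
  · simp [hτ, max_eq_left (sub_nonneg.2 hτ.le)]
  · simp [hτ, max_eq_right (sub_nonpos.2 (not_lt.1 hτ))]

theorem integrableOn_exp_neg_mul_mul_ramp (hη : 0 < η) {a c : ℝ} :
    IntegrableOn (fun τ ↦ exp (-η * (τ - a)) * max (τ - c) 0) (Ioi a) := by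
  rw [mul_max_sub_zero_eq_indicator]
  exact ((integrable_indicator_iff measurableSet_Ioi).2
    (integrableOn_exp_neg_mul_mul_sub_Ioi hη a c)).integrableOn

theorem integral_exp_neg_mul_mul_ramp (hη : 0 < η) {a c : ℝ} (hac : a ≤ c) :
    ∫ τ in Ioi a, exp (-η * (τ - a)) * max (τ - c) 0 = exp (-η * (c - a)) / η ^ 2 := by
  rw [mul_max_sub_zero_eq_indicator, setIntegral_indicator measurableSet_Ioi,
    inter_eq_right.2 (Ioi_subset_Ioi hac), integral_exp_neg_mul_mul_sub_Ioi hη]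

theorem exp_neg_mul_sub_eq (a : ℝ) :
    (fun τ ↦ exp (-η * (τ - a))) = fun τ ↦ exp (η * a) * exp (-η * τ) :=
  funext fun τ ↦ by rw [← exp_add]; ring_nf

theorem integrableOn_exp_neg_mul_sub_Ioi (hη : 0 < η) (a : ℝ) :
    IntegrableOn (fun τ ↦ exp (-η * (τ - a))) (Ioi a) := by
  rw [exp_neg_mul_sub_eq]
  exact (exp_neg_integrableOn_Ioi a hη).const_mul _

theorem integral_exp_neg_mul_sub_Ioi (hη : 0 < η) (a : ℝ) :
    ∫ τ in Ioi a, exp (-η * (τ - a)) = 1 / η := by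
  rw [exp_neg_mul_sub_eq, integral_const_mul, integral_exp_mul_Ioi (neg_lt_zero.2 hη),
    mul_div_assoc', mul_neg, ← exp_add]
  field_simp
  simp

def clippedRamp (a δ : ℝ) (i : ℕ) (τ : ℝ) : ℝ :=
  max (τ - (a + i * δ)) 0 - max (τ - (a + (i + 1) * δ)) 0

theorem clippedRamp_nonneg {δ : ℝ} (hδ : 0 ≤ δ) (a : ℝ) (i : ℕ) (τ : ℝ) :
    0 ≤ clippedRamp a δ i τ :=
  sub_nonneg.2 (max_le_max (by nlinarith) le_rfl)

theorem integrableOn_exp_neg_mul_mul_clippedRamp (hη : 0 < η) (a δ : ℝ) (i : ℕ) :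
    IntegrableOn (fun τ ↦ exp (-η * (τ - a)) * clippedRamp a δ i τ) (Ioi a) := by
  simp_rw [clippedRamp, mul_sub (exp _)]
  exact (integrableOn_exp_neg_mul_mul_ramp hη).sub (integrableOn_exp_neg_mul_mul_ramp hη)

theorem integral_exp_neg_mul_mul_clippedRamp (hη : 0 < η) {δ : ℝ} (hδ : 0 ≤ δ) (a : ℝ)
    (i : ℕ) :
    ∫ τ in Ioi a, exp (-η * (τ - a)) * clippedRamp a δ i τ
      = (1 - exp (-η * δ)) / η ^ 2 * exp (-i * η * δ) := by
  simp_rw [clippedRamp, mul_sub (exp _)]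
  rw [integral_sub (integrableOn_exp_neg_mul_mul_ramp hη) (integrableOn_exp_neg_mul_mul_ramp hη),
    integral_exp_neg_mul_mul_ramp hη (by nlinarith),
    integral_exp_neg_mul_mul_ramp hη (by nlinarith),
    show -η * (a + (i + 1) * δ - a) = -i * η * δ + -η * δ by ring, exp_add]
  ring_nf

end

theorem summable_exp_neg_nat_mul_mul_of_abs_le {η δ γ : ℝ} (hη : 0 < η) (hδ : 0 < δ)
    {w : ℕ → ℝ} (hw : ∀ i, |w i| ≤ γ) : Summable fun i : ℕ ↦ exp (-i * η * δ) * w i := by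
  have hgeom : Summable fun i : ℕ ↦ exp (i * (-(η * δ))) :=
    summable_exp_nat_mul_iff.2 (neg_lt_zero.2 (mul_pos hη hδ))
  refine Summable.of_norm_bounded (hgeom.mul_right γ) fun i ↦ ?_
  rw [norm_mul, norm_of_nonneg (exp_pos _).le, show -(i : ℝ) * η * δ = i * (-(η * δ)) by ring]
  exact mul_le_mul_of_nonneg_left (hw i) (exp_pos _).le

theorem stmt_7_general (η δ γ tk xzk : ℝ) (hη : 0 < η) (hδ : 0 < δ)
    (v : ℕ → ℝ) (hv : ∀ i, |v i| ≤ γ)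
    (xz : ℝ → ℝ)
    (hxz : ∀ t, xz t = xzk + ∑' i : ℕ,
      (max (t - (tk + i * δ)) 0 - max (t - (tk + (i + 1) * δ)) 0) * v i) :
    η * ∫ τ in Set.Ioi tk, Real.exp (-η * (τ - tk)) * xz τ
      = xzk + (1 - Real.exp (-η * δ)) / η * ∑' i : ℕ, Real.exp (-(i : ℝ) * η * δ) * v i := by
  set F : ℕ → ℝ → ℝ := fun i τ ↦ exp (-η * (τ - tk)) * clippedRamp tk δ i τ * v i
  have hF_int (i : ℕ) : IntegrableOn (F i) (Ioi tk) :=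
    (integrableOn_exp_neg_mul_mul_clippedRamp hη tk δ i).mul_const _
  have hF_integral (i : ℕ) (w : ℝ) :
      ∫ τ in Ioi tk, exp (-η * (τ - tk)) * clippedRamp tk δ i τ * w
        = (1 - exp (-η * δ)) / η ^ 2 * (exp (-i * η * δ) * w) := by
    rw [integral_mul_const, integral_exp_neg_mul_mul_clippedRamp hη hδ.le, mul_assoc]
  have hF_norm (i : ℕ) : ∫ τ in Ioi tk, ‖F i τ‖
      = (1 - exp (-η * δ)) / η ^ 2 * (exp (-i * η * δ) * |v i|) := by
    simp_rw [F, norm_mul, norm_of_nonneg (exp_pos _).le,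
      norm_of_nonneg (clippedRamp_nonneg hδ.le _ _ _), norm_eq_abs]
    exact hF_integral i |v i|
  have hF_sum : Summable fun i ↦ ∫ τ in Ioi tk, ‖F i τ‖ := by
    simp_rw [hF_norm]
    exact (summable_exp_neg_nat_mul_mul_of_abs_le hη hδ
      fun i ↦ (abs_abs (v i)).trans_le (hv i)).mul_left _
  have hpointwise (τ : ℝ) :
      exp (-η * (τ - tk)) * xz τ = exp (-η * (τ - tk)) * xzk + ∑' i, F i τ := by
    rw [hxz, mul_add, ← tsum_mul_left]
    simp only [F, clippedRamp, mul_assoc]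
  calc η * ∫ τ in Ioi tk, exp (-η * (τ - tk)) * xz τ
      = η * ((∫ τ in Ioi tk, exp (-η * (τ - tk))) * xzk + ∑' i, ∫ τ in Ioi tk, F i τ) := by
        simp_rw [hpointwise]
        rw [integral_add ((integrableOn_exp_neg_mul_sub_Ioi hη tk).mul_const xzk)
          (integrable_tsum_of_summable_integral_norm hF_int hF_sum), integral_mul_const,
          integral_tsum_of_summable_integral_norm hF_int hF_sum]
    _ = xzk + (1 - exp (-η * δ)) / η * ∑' i : ℕ, exp (-(i : ℝ) * η * δ) * v i := by
        simp_rw [F, hF_integral, integral_exp_neg_mul_sub_Ioi hη, tsum_mul_left]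
        field_simp

/-- Proposition 1, stability condition form: for the piecewise-linear ZMP
trajectory `x_z(t) = x_z^k + Σ_{i=0}^∞ (ρ(t − t_{k+i}) − ρ(t − t_{k+i+1})) v_i` with
`|v_i| ≤ γ`, it holds
`η ∫_{t_k}^∞ e^{−η(τ−t_k)} x_z(τ) dτ = x_z^k + ((1 − e^{−ηδ})/η) Σ_{i=0}^∞ e^{−iηδ} v_i`. -/
theorem stmt_7 (η δ γ tk xzk : ℝ) (hη : 0 < η) (hδ : 0 < δ) (hγ : 0 ≤ γ)
    (v : ℕ → ℝ) (hv : ∀ i, |v i| ≤ γ)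
    (xz : ℝ → ℝ)
    (hxz : ∀ t, xz t = xzk + ∑' i : ℕ,
      (max (t - (tk + i * δ)) 0 - max (t - (tk + (i + 1) * δ)) 0) * v i) :
    η * ∫ τ in Set.Ioi tk, Real.exp (-η * (τ - tk)) * xz τ
      = xzk + (1 - Real.exp (-η * δ)) / η * ∑' i : ℕ, Real.exp (-(i : ℝ) * η * δ) * v i :=
  stmt_7_general η δ γ tk xzk hη hδ v hv xz hxz
end

section
/- (Proposition 4, feasibility characterization) Let η > 0, T_c > 0, t_k ∈ ℝ, and set t_{k+C} = t_k + T_c. Let x_z^m : [t_k, t_{k+C}] → ℝ be continuous, d > 0, and x_z^M(t) = x_z^m(t) + d. Let S ∈ ℝ be a given tail term, and define x_u^{k,m} = η ∫_{t_k}^{t_{k+C}} e^{−η(τ−t_k)} x_z^m(τ) dτ + S and x_u^{k,M} = η ∫_{t_k}^{t_{k+C}} e^{−η(τ−t_k)} x_z^M(τ) dτ + S. Then for x_u^k ∈ ℝ the following are equivalent: (i) there exists a continuous function x_z : [t_k, t_{k+C}] → ℝ with x_z^m(t) ≤ x_z(t) ≤ x_z^M(t) for all t ∈ [t_k, t_{k+C}]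 and η ∫_{t_k}^{t_{k+C}} e^{−η(τ−t_k)} x_z(τ) dτ + S = x_u^k; (ii) x_u^{k,m} ≤ x_u^k ≤ x_u^{k,M}. -/
open MeasureTheory Real intervalIntegral

/-- Proposition 4, feasibility characterization: there exists a continuous
ZMP trajectory `x_z` on `[t_k, t_k + T_c]` satisfying the ZMP constraint
`x_z^m ≤ x_z ≤ x_z^M = x_z^m + d` and the stability constraint
`η ∫_{t_k}^{t_{k+C}} e^{−η(τ−t_k)} x_z(τ) dτ + S = x_u^k`
if and only if `x_u^{k,m} ≤ x_u^k ≤ x_u^{k,M}`. -/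
theorem stmt_13 (η Tc tk d S xuk : ℝ) (hη : 0 < η) (hTc : 0 < Tc) (hd : 0 < d)
    (xzm : ℝ → ℝ) (hxzm : ContinuousOn xzm (Set.Icc tk (tk + Tc))) :
    (∃ xz : ℝ → ℝ, ContinuousOn xz (Set.Icc tk (tk + Tc)) ∧
        (∀ t ∈ Set.Icc tk (tk + Tc), xzm t ≤ xz t ∧ xz t ≤ xzm t + d) ∧
        (η * ∫ τ in tk..(tk + Tc), Real.exp (-η * (τ - tk)) * xz τ) + S = xuk)
    ↔ ((η * ∫ τ in tk..(tk + Tc), Real.exp (-η * (τ - tk)) * xzm τ) + S ≤ xuk ∧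
        xuk ≤ (η * ∫ τ in tk..(tk + Tc), Real.exp (-η * (τ - tk)) * (xzm τ + d)) + S) := by
  have hab : tk ≤ tk + Tc := by linarith
  set b := tk + Tc with hb
  have hwc : Continuous fun τ : ℝ => Real.exp (-η * (τ - tk)) := by continuity
  have hInt : ∀ g : ℝ → ℝ, ContinuousOn g (Set.Icc tk b) →
      IntervalIntegrable (fun τ => Real.exp (-η * (τ - tk)) * g τ) volume tk b := by
    intro g hg
    apply ContinuousOn.intervalIntegrable
    rw [Set.uIcc_of_le hab]
    exact hwc.continuousOn.mul hg
  have hIw : IntervalIntegrable (fun τ => Real.exp (-η * (τ - tk))) volume tk b :=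
    hwc.intervalIntegrable _ _
  have hIpos : 0 < ∫ τ in tk..b, Real.exp (-η * (τ - tk)) := by
    apply intervalIntegral.intervalIntegral_pos_of_pos_on hIw
    · intro x _; positivity
    · linarith
  set I := ∫ τ in tk..b, Real.exp (-η * (τ - tk)) with hI
  set A := ∫ τ in tk..b, Real.exp (-η * (τ - tk)) * xzm τ with hA
  have hshift : ∀ c : ℝ,
      (∫ τ in tk..b, Real.exp (-η * (τ - tk)) * (xzm τ + c)) = A + c * I := by
    intro c
    have h1 : (fun τ => Real.exp (-η * (τ - tk)) * (xzm τ + c))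
        = fun τ => Real.exp (-η * (τ - tk)) * xzm τ + c * Real.exp (-η * (τ - tk)) := by
      funext τ; ring
    rw [h1, intervalIntegral.integral_add (hInt xzm hxzm) (hIw.const_mul c),
      intervalIntegral.integral_const_mul]
  constructor
  · rintro ⟨xz, hxz, hbd, hst⟩
    have h1 : A ≤ ∫ τ in tk..b, Real.exp (-η * (τ - tk)) * xz τ := by
      apply intervalIntegral.integral_mono_on hab (hInt xzm hxzm) (hInt xz hxz)
      intro x hx
      exact mul_le_mul_of_nonneg_left (hbd x hx).1 (Real.exp_pos _).le
    have h2 : (∫ τ in tk..b, Real.exp (-η * (τ - tk)) * xz τ)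
        ≤ ∫ τ in tk..b, Real.exp (-η * (τ - tk)) * (xzm τ + d) := by
      apply intervalIntegral.integral_mono_on hab (hInt xz hxz)
        (hInt _ (hxzm.add continuousOn_const))
      intro x hx
      exact mul_le_mul_of_nonneg_left (hbd x hx).2 (Real.exp_pos _).le
    constructor
    · nlinarith
    · nlinarith
  · rintro ⟨hlo, hhi⟩
    have hup := hshift d
    set c := (xuk - (η * A + S)) / (η * I) with hc
    have hηI : 0 < η * I := by positivity
    have hc0 : 0 ≤ c := by
      apply div_nonneg _ hηI.le
      linarith
    have hcd : c ≤ d := by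
      rw [div_le_iff₀ hηI]
      nlinarith
    refine ⟨fun t => xzm t + c, hxzm.add continuousOn_const, ?_, ?_⟩
    · intro t _
      refine ⟨?_, ?_⟩ <;> show _ ≤ _ <;> simp only [] <;> linarith
    · rw [hshift c]
      have : c * (η * I) = xuk - (η * A + S) := by
        rw [hc]; field_simp
      nlinarith
end

section
/- Let η > 0, T_c > 0, t_k ∈ ℝ, t_{k+C} = t_k + T_c, let x_z^m : [t_k, t_{k+C}] → ℝ be continuous, d > 0, x_z^M(t) = x_z^m(t) + d, S ∈ ℝ, x_u^{k,m} = η ∫_{t_k}^{t_{k+C}} e^{−η(τ−t_k)} x_z^m(τ) dτ + S, and x_u^{k,M} = η ∫_{t_k}^{t_{k+C}} e^{−η(τ−t_k)} x_z^M(τ) dτ + S. If x_u^{k,m} ≤ x_u^k ≤ x_u^{k,M}, then the trajectory defined by x_z(t) = x_z^M(t) − (x_u^{k,M} − x_u^k)/(1 − e^{−ηT_c}) satisfies both x_z^m(t) ≤ x_z(t) ≤ x_z^M(t) for all t ∈ [t_k, t_{k+C}] and η ∫_{t_k}^{t_{k+C}} e^{−η(τ−t_k)} x_z(τ) dτ +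 S = x_u^k. -/
open MeasureTheory Real intervalIntegral

/-- if `x_u^{k,m} ≤ x_u^k ≤ x_u^{k,M}`, then the explicit ZMP trajectory
`x_z(t) = x_z^M(t) − (x_u^{k,M} − x_u^k)/(1 − e^{−ηT_c})` (with `x_z^M = x_z^m + d`)
satisfies both the ZMP constraint and the stability constraint. -/
theorem stmt_14 (η Tc tk d S xuk : ℝ) (hη : 0 < η) (hTc : 0 < Tc) (hd : 0 < d)
    (xzm : ℝ → ℝ) (hxzm : ContinuousOn xzm (Set.Icc tk (tk + Tc)))
    (xukm xukM : ℝ)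
    (hxukm : xukm = (η * ∫ τ in tk..(tk + Tc), Real.exp (-η * (τ - tk)) * xzm τ) + S)
    (hxukM : xukM = (η * ∫ τ in tk..(tk + Tc),
        Real.exp (-η * (τ - tk)) * (xzm τ + d)) + S)
    (hfeas : xukm ≤ xuk ∧ xuk ≤ xukM)
    (xz : ℝ → ℝ)
    (hxz : ∀ t, xz t = (xzm t + d) - (xukM - xuk) / (1 - Real.exp (-η * Tc))) :
    (∀ t ∈ Set.Icc tk (tk + Tc), xzm t ≤ xz t ∧ xz t ≤ xzm t + d) ∧
    (η * ∫ τ in tk..(tk + Tc), Real.exp (-η * (τ - tk)) * xz τ) + S = xuk := by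
  obtain ⟨h1, h2⟩ := hfeas
  have hle : tk ≤ tk + Tc := by linarith
  have hη' : η ≠ 0 := ne_of_gt hη
  have hepos : (0:ℝ) < 1 - Real.exp (-η * Tc) := by
    have : Real.exp (-η * Tc) < 1 := by
      rw [Real.exp_lt_one_iff]; nlinarith
    linarith
  have hEcont : Continuous fun τ : ℝ => Real.exp (-η * (τ - tk)) := by continuity
  have hI1 : IntervalIntegrable (fun τ => Real.exp (-η * (τ - tk)) * xzm τ)
      volume tk (tk + Tc) := by
    apply ContinuousOn.intervalIntegrable
    apply hEcont.continuousOn.mul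
    rwa [Set.uIcc_of_le hle]
  have hIE : IntervalIntegrable (fun τ => Real.exp (-η * (τ - tk))) volume tk (tk + Tc) :=
    hEcont.continuousOn.intervalIntegrable
  have hintE : (∫ τ in tk..(tk + Tc), Real.exp (-η * (τ - tk)))
      = (1 - Real.exp (-η * Tc)) / η := by
    have h0 : (∫ τ in tk..(tk + Tc), Real.exp (-η * (τ - tk)))
        = ∫ τ in (tk - tk)..(tk + Tc - tk), Real.exp (-η * τ) :=
      (intervalIntegral.integral_comp_sub_right (fun x => Real.exp (-η * x)) tk).symm ▸ rfl
    rw [intervalIntegral.integral_comp_sub_right (fun x => Real.exp (-η * x)) tk]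
    have : tk + Tc - tk = Tc := by ring
    rw [this, sub_self]
    have hc : (-η) ≠ 0 := by simpa using hη'
    rw [intervalIntegral.integral_comp_mul_left Real.exp hc]
    simp [integral_exp, mul_comm]
    field_simp
    ring
  -- expand the upper integral
  have hsplit : (∫ τ in tk..(tk + Tc), Real.exp (-η * (τ - tk)) * (xzm τ + d))
      = (∫ τ in tk..(tk + Tc), Real.exp (-η * (τ - tk)) * xzm τ)
        + d * ((1 - Real.exp (-η * Tc)) / η) := by
    have : (∫ τ in tk..(tk + Tc), Real.exp (-η * (τ - tk)) * (xzm τ + d))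
        = (∫ τ in tk..(tk + Tc), Real.exp (-η * (τ - tk)) * xzm τ)
          + d * ∫ τ in tk..(tk + Tc), Real.exp (-η * (τ - tk)) := by
      rw [← intervalIntegral.integral_const_mul, ← intervalIntegral.integral_add hI1
        (hIE.const_mul d)]
      congr 1; funext τ; ring
    rw [this, hintE]
  have hdiff : xukM - xukm = d * (1 - Real.exp (-η * Tc)) := by
    rw [hxukM, hxukm, hsplit]; field_simp; ring
  set c := (xukM - xuk) / (1 - Real.exp (-η * Tc)) with hc
  have hc0 : 0 ≤ c := div_nonneg (by linarith) (le_of_lt hepos)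
  have hcd : c ≤ d := by
    rw [hc, div_le_iff₀ hepos]; nlinarith
  constructor
  · intro t ht
    rw [hxz t]
    constructor <;> [linarith [hcd]; linarith [hc0]]
  · have hint : (∫ τ in tk..(tk + Tc), Real.exp (-η * (τ - tk)) * xz τ)
        = (∫ τ in tk..(tk + Tc), Real.exp (-η * (τ - tk)) * (xzm τ + d))
          - c * ((1 - Real.exp (-η * Tc)) / η) := by
      have heq : (fun τ => Real.exp (-η * (τ - tk)) * xz τ)
          = fun τ => (Real.exp (-η * (τ - tk)) * xzm τ + d * Real.exp (-η * (τ - tk)))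
            - c * Real.exp (-η * (τ - tk)) := by
        funext τ; rw [hxz τ]; ring
      rw [heq, intervalIntegral.integral_sub (hI1.add (hIE.const_mul d)) (hIE.const_mul c),
        intervalIntegral.integral_add hI1 (hIE.const_mul d),
        intervalIntegral.integral_const_mul, intervalIntegral.integral_const_mul, hintE, hsplit]
    rw [hint]
    have hce : c * (1 - Real.exp (-η * Tc)) = xukM - xuk := by
      rw [hc, div_mul_cancel₀ _ (ne_of_gt hepos)]
    have hkey : η * (c * ((1 - Real.exp (-η * Tc)) / η)) = xukM - xuk := by
      rw [mul_comm, mul_assoc, div_mul_cancel₀ _ hη', hce]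
    rw [mul_sub, hkey]
    linarith [hxukM]
end

section
/- Let η > 0, let t_k < t_{k+1} ≤ t_{k+C} be real instants, let x_z : [t_k, t_{k+C}] → ℝ and x_z^M : [t_k, t_{k+C}] → ℝ be continuous with x_z(τ) ≤ x_z^M(τ) for all τ ∈ [t_k, t_{k+C}], and let x̃_z : [t_{k+C}, ∞) → ℝ be measurable with |x̃_z(τ)| ≤ a + b·τ for constants a, b ≥ 0. Let x_u : [t_k, t_{k+1}] → ℝ be differentiable with x_u'(t) = η(x_u(t) − x_z(t)) and initial condition x_u(t_k) = η ∫_{t_k}^{t_{k+C}} e^{−η(τ−t_k)} x_z(τ) dτ + η ∫_{t_{k+C}}^∞ e^{−η(τ−t_k)} x̃_z(τ) dτ. Then x_u(t_{k+1}) ≤ η ∫_{t_{k+1}}^{t_{k+C}} e^{−η(τ−t_{k+1})} x_z^M(τ) dτ + η ∫_{t_{k+C}}^∞ e^{−η(τ−t_{k+1})} x̃_z(τ) dτ. -/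
open MeasureTheory Real intervalIntegral

/-! Along a solution of `x' = η (x - z)` the discounted state `e^{-η t} x(t)` has derivative
`-η e^{-η t} z(t)`, so moving from `t_k` to `t_{k+1}` just removes the `[t_k, t_{k+1}]` part from
the discounted ZMP integral. Rescaling the discount to `t_{k+1}`, `x_u(t_{k+1})` is the stability
integral over `[t_{k+1}, t_{k+C}]` plus the unchanged tail, and `x_z ≤ x_z^M` bounds the former. -/

lemma exp_neg_mul_sub (η c τ : ℝ) : exp (-η * (τ - c)) = exp (η * c) * exp (-η * τ) := by
  rw [← exp_add]
  congr 1
  ring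

lemma IntervalIntegrable.exp_neg_mul_mul {z : ℝ → ℝ} {s t : ℝ} (η : ℝ)
    (hz : IntervalIntegrable z volume s t) :
    IntervalIntegrable (fun τ => exp (-η * τ) * z τ) volume s t :=
  hz.continuousOn_mul (by fun_prop)

lemma hasDerivWithinAt_exp_neg_mul_mul {x : ℝ → ℝ} {S : Set ℝ} {η τ ξ : ℝ}
    (hx : HasDerivWithinAt x (η * (x τ - ξ)) S τ) :
    HasDerivWithinAt (fun t => exp (-η * t) * x t) (-η * (exp (-η * τ) * ξ)) S τ := by
  have hexp : HasDerivWithinAt (fun t => exp (-η * t)) (exp (-η * τ) * -η) S τ := by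
    simpa using (((hasDerivAt_id τ).const_mul (-η)).exp).hasDerivWithinAt
  exact (hexp.mul hx).congr_deriv (by ring)

lemma exp_neg_mul_mul_eq_sub_integral {x z : ℝ → ℝ} {η s t : ℝ} (hst : s ≤ t)
    (hz : IntervalIntegrable z volume s t)
    (hx : ∀ τ ∈ Set.Icc s t, HasDerivWithinAt x (η * (x τ - z τ)) (Set.Icc s t) τ) :
    exp (-η * t) * x t = exp (-η * s) * x s - η * ∫ τ in s..t, exp (-η * τ) * z τ := by
  have hderiv := fun τ hτ => hasDerivWithinAt_exp_neg_mul_mul (hx τ hτ)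
  have hftc := integral_eq_sub_of_hasDeriv_right_of_le hst
    (fun τ hτ => (hderiv τ hτ).continuousWithinAt)
    (fun τ hτ => (hderiv τ (Set.Ioo_subset_Icc_self hτ)).mono_of_mem_nhdsWithin
      (Icc_mem_nhdsGT_of_mem ⟨hτ.1.le, hτ.2⟩))
    ((hz.exp_neg_mul_mul η).const_mul (-η))
  rw [intervalIntegral.integral_const_mul] at hftc
  linarith

theorem stmt_16_general (η tk tk1 tkC : ℝ) (hη : 0 < η)
    (hlt : tk < tk1) (hle : tk1 ≤ tkC)
    (xz xzM : ℝ → ℝ)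
    (hxz : ContinuousOn xz (Set.Icc tk tkC))
    (hxzM : ContinuousOn xzM (Set.Icc tk tkC))
    (hub : ∀ τ ∈ Set.Icc tk tkC, xz τ ≤ xzM τ)
    (tail : ℝ → ℝ)
    (xu : ℝ → ℝ)
    (hode : ∀ t ∈ Set.Icc tk tk1,
      HasDerivWithinAt xu (η * (xu t - xz t)) (Set.Icc tk tk1) t)
    (hinit : xu tk = (η * ∫ τ in tk..tkC, Real.exp (-η * (τ - tk)) * xz τ)
        + η * ∫ τ in Set.Ioi tkC, Real.exp (-η * (τ - tk)) * tail τ) :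
    xu tk1 ≤ (η * ∫ τ in tk1..tkC, Real.exp (-η * (τ - tk1)) * xzM τ)
        + η * ∫ τ in Set.Ioi tkC, Real.exp (-η * (τ - tk1)) * tail τ := by
  have hsub₁ : Set.Icc tk tk1 ⊆ Set.Icc tk tkC := Set.Icc_subset_Icc le_rfl hle
  have hsub₂ : Set.Icc tk1 tkC ⊆ Set.Icc tk tkC := Set.Icc_subset_Icc hlt.le le_rfl
  have hxz₁ := (hxz.mono hsub₁).intervalIntegrable_of_Icc (μ := volume) hlt.le
  have hxz₂ := (hxz.mono hsub₂).intervalIntegrable_of_Icc (μ := volume) hle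
  have hxzM₂ := (hxzM.mono hsub₂).intervalIntegrable_of_Icc (μ := volume) hle
  have hflow := exp_neg_mul_mul_eq_sub_integral hlt.le hxz₁ hode
  have hmono : ∫ τ in tk1..tkC, exp (-η * τ) * xz τ ≤ ∫ τ in tk1..tkC, exp (-η * τ) * xzM τ :=
    integral_mono_on hle (hxz₂.exp_neg_mul_mul η) (hxzM₂.exp_neg_mul_mul η)
      fun τ hτ => mul_le_mul_of_nonneg_left (hub τ (hsub₂ hτ)) (exp_pos _).le
  simp_rw [exp_neg_mul_sub, mul_assoc, intervalIntegral.integral_const_mul,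
    MeasureTheory.integral_const_mul] at hinit ⊢
  rw [← integral_add_adjacent_intervals (hxz₁.exp_neg_mul_mul η) (hxz₂.exp_neg_mul_mul η)]
    at hinit
  have hexp (c : ℝ) : exp (η * c) * exp (-η * c) = 1 := by rw [← exp_add]; simp
  set A := ∫ τ in tk..tk1, exp (-η * τ) * xz τ
  set B := ∫ τ in tk1..tkC, exp (-η * τ) * xz τ
  set T := ∫ τ in Set.Ioi tkC, exp (-η * τ) * tail τ
  have hdisc : exp (-η * tk1) * xu tk1 = η * B + η * T := by
    rw [hflow, hinit]
    linear_combination η * (A + B + T) * hexp tk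
  calc xu tk1 = exp (η * tk1) * (exp (-η * tk1) * xu tk1) := by rw [← mul_assoc, hexp, one_mul]
    _ = η * (exp (η * tk1) * B) + η * (exp (η * tk1) * T) := by rw [hdisc]; ring
    _ ≤ _ := by gcongr

/-- key step in the recursive feasibility proof. If `x_u' = η(x_u − x_z)` on
`[t_k, t_{k+1}]` with the stability-constrained initial condition at `t_k` (discounted
integral of the planned ZMP `x_z` over `[t_k, t_{k+C}]` plus that of the tail `x̃_z` after
`t_{k+C}`), and `x_z ≤ x_z^M` on `[t_k, t_{k+C}]`, then
`x_u(t_{k+1}) ≤ η ∫_{t_{k+1}}^{t_{k+C}} e^{−η(τ−t_{k+1})} x_z^M dτ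
   + η ∫_{t_{k+C}}^∞ e^{−η(τ−t_{k+1})} x̃_z dτ`. -/
theorem stmt_16 (η tk tk1 tkC a b : ℝ) (hη : 0 < η)
    (hlt : tk < tk1) (hle : tk1 ≤ tkC) (ha : 0 ≤ a) (hb : 0 ≤ b)
    (xz xzM : ℝ → ℝ)
    (hxz : ContinuousOn xz (Set.Icc tk tkC))
    (hxzM : ContinuousOn xzM (Set.Icc tk tkC))
    (hub : ∀ τ ∈ Set.Icc tk tkC, xz τ ≤ xzM τ)
    (tail : ℝ → ℝ) (htail : Measurable tail)
    (htailgrowth : ∀ τ, tkC ≤ τ → |tail τ| ≤ a + b * τ)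
    (xu : ℝ → ℝ)
    (hode : ∀ t ∈ Set.Icc tk tk1,
      HasDerivWithinAt xu (η * (xu t - xz t)) (Set.Icc tk tk1) t)
    (hinit : xu tk = (η * ∫ τ in tk..tkC, Real.exp (-η * (τ - tk)) * xz τ)
        + η * ∫ τ in Set.Ioi tkC, Real.exp (-η * (τ - tk)) * tail τ) :
    xu tk1 ≤ (η * ∫ τ in tk1..tkC, Real.exp (-η * (τ - tk1)) * xzM τ)
        + η * ∫ τ in Set.Ioi tkC, Real.exp (-η * (τ - tk1)) * tail τ :=
  stmt_16_general η tk tk1 tkC hη hlt hle xz xzM hxz hxzM hub tail xu hode hinit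
end

section
/- Let η > 0, δ > 0, d > 0, let C < P be nonnegative integers, and let v ∈ ℝ. Define g : [Pδ, ∞) → ℝ by g(τ) = v · min(τ − Pδ, δ). Then ∫_{Cδ}^{(C+1)δ} e^{η(δ−τ)} (d/2) dτ + ∫_{Pδ}^∞ e^{η(δ−τ)} g(τ) dτ = ((1 − e^{−ηδ}) e^{η(δ − Cδ)} / η) · (d/2 + (v/η) e^{−η(P−C)δ}). Consequently, the left-hand side is nonnegative if and only if (e^{−η(Pδ−Cδ)}/η)·v + d/2 ≥ 0; in particular, if |v| ≤ v_max for some v_max > 0 and Pδ ≥ Cδ + (1/η)·log(2 v_max/(η d)), then the left-hand side is nonnegative. -/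
/-!
Every integral against the discount weight `w(τ) = e^{η(s - τ)}` is elementary, since
`-w/η` is an antiderivative of `w`. The plateau term is `(d/2)(w(Cδ) - w(Cδ + δ))/η`, and the
ramp `min(τ - Pδ, δ)` contributes `(w(Pδ) - w(Pδ + δ))/η²`: on `[Pδ, Pδ + δ]` it is linear and
beyond it is the constant `δ`, and the two boundary terms at `Pδ + δ` cancel. Both are multiples
of `(1 - e^{-ηδ}) w(Cδ)/η`, a positive factor, which gives the identity and the sign criterion.
The bound on the horizon makes `e^{-η(P - C)δ} ≤ ηd/(2 v_max)`, so `|v| e^{-η(P - C)δ}/η ≤ d/2`.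
-/

open MeasureTheory Real intervalIntegral Set Filter Topology

section ExpWeight

variable {η : ℝ} (s : ℝ)

lemma hasDerivAt_exp_mul_sub (x : ℝ) :
    HasDerivAt (fun τ => exp (η * (s - τ))) (-η * exp (η * (s - x))) x :=
  (((hasDerivAt_id' x).const_sub s).const_mul η).exp.congr_deriv (by ring)

lemma hasDerivAt_neg_exp_mul_sub_div (hη : η ≠ 0) (x : ℝ) :
    HasDerivAt (fun τ => -exp (η * (s - τ)) / η) (exp (η * (s - x))) x :=
  ((hasDerivAt_exp_mul_sub s x).neg.div_const η).congr_deriv (by field_simp)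

lemma tendsto_exp_mul_sub_atTop (hη : 0 < η) :
    Tendsto (fun τ => exp (η * (s - τ))) atTop (𝓝 0) :=
  tendsto_exp_atBot.comp <|
    (tendsto_atBot_add_const_left _ s tendsto_neg_atTop_atBot).const_mul_atBot hη

lemma integral_exp_mul_sub (hη : η ≠ 0) (a b : ℝ) :
    ∫ τ in a..b, exp (η * (s - τ)) = (exp (η * (s - a)) - exp (η * (s - b))) / η := by
  rw [integral_eq_sub_of_hasDerivAt (fun x _ => hasDerivAt_neg_exp_mul_sub_div s hη x)
    ((by fun_prop : Continuous fun τ => exp (η * (s - τ))).intervalIntegrable _ _)]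
  ring

lemma integrableOn_Ioi_exp_mul_sub (hη : 0 < η) (a : ℝ) :
    IntegrableOn (fun τ => exp (η * (s - τ))) (Ioi a) :=
  integrableOn_Ioi_deriv_of_nonneg' (fun x _ => hasDerivAt_neg_exp_mul_sub_div s hη.ne' x)
    (fun _ _ => (exp_pos _).le) ((tendsto_exp_mul_sub_atTop s hη).neg.div_const η)

lemma integral_Ioi_exp_mul_sub (hη : 0 < η) (a : ℝ) :
    ∫ τ in Ioi a, exp (η * (s - τ)) = exp (η * (s - a)) / η := by
  rw [integral_Ioi_of_hasDerivAt_of_nonneg' (fun x _ => hasDerivAt_neg_exp_mul_sub_div s hη.ne' x)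
    (fun _ _ => (exp_pos _).le) ((tendsto_exp_mul_sub_atTop s hη).neg.div_const η)]
  ring

lemma integral_exp_mul_sub_mul_sub (hη : η ≠ 0) (a b : ℝ) :
    ∫ τ in a..b, exp (η * (s - τ)) * (τ - a) =
      (exp (η * (s - a)) - (1 + η * (b - a)) * exp (η * (s - b))) / η ^ 2 := by
  have hderiv : ∀ x ∈ uIcc a b, HasDerivAt (fun τ => -exp (η * (s - τ)) * ((τ - a) / η + 1 / η ^ 2))
      (exp (η * (s - x)) * (x - a)) x := fun x _ =>
    ((hasDerivAt_exp_mul_sub (η := η) s x).neg.mul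
      ((((hasDerivAt_id' x).sub_const a).div_const η).add_const (1 / η ^ 2))).congr_deriv
      (by simp only [Pi.neg_apply]; field_simp; ring)
  rw [integral_eq_sub_of_hasDerivAt hderiv
    ((by fun_prop : Continuous fun τ => exp (η * (s - τ)) * (τ - a)).intervalIntegrable _ _)]
  field_simp
  ring

lemma integral_Ioi_exp_mul_sub_mul_min (hη : 0 < η) {δ : ℝ} (hδ : 0 ≤ δ) (a : ℝ) :
    ∫ τ in Ioi a, exp (η * (s - τ)) * min (τ - a) δ =
      (exp (η * (s - a)) - exp (η * (s - (a + δ)))) / η ^ 2 := by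
  have hramp : ∫ τ in a..a + δ, exp (η * (s - τ)) * min (τ - a) δ =
      ∫ τ in a..a + δ, exp (η * (s - τ)) * (τ - a) := by
    refine integral_congr fun τ hτ => ?_
    rw [uIcc_of_le (by linarith)] at hτ
    simp only [min_eq_left (by linarith [hτ.2] : τ - a ≤ δ)]
  have hflat : EqOn (fun τ => exp (η * (s - τ)) * min (τ - a) δ)
      (fun τ => exp (η * (s - τ)) * δ) (Ioi (a + δ)) := fun τ hτ => by
    simp only [min_eq_right (by linarith [mem_Ioi.mp hτ] : δ ≤ τ - a)]
  rw [← integral_interval_add_Ioi' (b := a + δ)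
      ((by fun_prop : Continuous fun τ => exp (η * (s - τ)) * min (τ - a) δ).intervalIntegrable _ _)
      (IntegrableOn.congr_fun ((integrableOn_Ioi_exp_mul_sub s hη _).mul_const δ) hflat.symm
        measurableSet_Ioi),
    hramp, setIntegral_congr_fun measurableSet_Ioi hflat, MeasureTheory.integral_mul_const,
    integral_exp_mul_sub_mul_sub s hη.ne', integral_Ioi_exp_mul_sub s hη]
  field_simp
  ring

end ExpWeight

lemma exp_neg_mul_div_mul_add_half_nonneg {η d v vmax t : ℝ} (hη : 0 < η) (hd : 0 < d)
    (hvmax : 0 < vmax) (hv : |v| ≤ vmax) (ht : log (2 * vmax / (η * d)) ≤ η * t) :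
    0 ≤ exp (-η * t) / η * v + d / 2 := by
  have hexp : exp (-η * t) ≤ η * d / (2 * vmax) := by
    rw [neg_mul, exp_neg, ← inv_div]
    exact inv_anti₀ (by positivity) ((log_le_iff_le_exp (by positivity)).1 ht)
  have hdrift : exp (-η * t) / η * |v| ≤ d / 2 :=
    calc exp (-η * t) / η * |v| ≤ η * d / (2 * vmax) / η * vmax := by gcongr
      _ = d / 2 := by field_simp
  have hneg : -(exp (-η * t) / η * |v|) ≤ exp (-η * t) / η * v := by
    rw [← mul_neg]
    gcongr
    exact neg_abs_le v
  linarith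

theorem stmt_17_general (η δ d v : ℝ) (hη : 0 < η) (hδ : 0 < δ) (hd : 0 < d)
    (C P : ℕ)
    (L : ℝ)
    (hL : L = (∫ τ in ((C : ℝ) * δ)..(((C : ℝ) + 1) * δ), Real.exp (η * (δ - τ)) * (d / 2))
        + ∫ τ in Set.Ioi ((P : ℝ) * δ),
            Real.exp (η * (δ - τ)) * (v * min (τ - (P : ℝ) * δ) δ)) :
    L = (1 - Real.exp (-η * δ)) * Real.exp (η * (δ - (C : ℝ) * δ)) / η *
        (d / 2 + v / η * Real.exp (-η * ((P : ℝ) - (C : ℝ)) * δ)) ∧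
    (0 ≤ L ↔ 0 ≤ Real.exp (-η * ((P : ℝ) * δ - (C : ℝ) * δ)) / η * v + d / 2) ∧
    (∀ vmax : ℝ, 0 < vmax → |v| ≤ vmax →
      (C : ℝ) * δ + 1 / η * Real.log (2 * vmax / (η * d)) ≤ (P : ℝ) * δ → 0 ≤ L) := by
  have hformula : L = (1 - exp (-η * δ)) * exp (η * (δ - C * δ)) / η *
      (d / 2 + v / η * exp (-η * ((P : ℝ) - C) * δ)) := by
    simp_rw [mul_left_comm _ v] at hL
    rw [hL, intervalIntegral.integral_mul_const, MeasureTheory.integral_const_mul,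
      integral_exp_mul_sub δ hη.ne', integral_Ioi_exp_mul_sub_mul_min δ hη hδ.le]
    set w := exp (η * (δ - C * δ))
    set E := exp (-η * ((P : ℝ) - C) * δ)
    have hshift : exp (η * (δ - (C + 1) * δ)) = exp (-η * δ) * w := by rw [← exp_add]; ring_nf
    have hP : exp (η * (δ - P * δ)) = w * E := by rw [← exp_add]; ring_nf
    have hPδ : exp (η * (δ - (P * δ + δ))) = exp (-η * δ) * w * E := by
      rw [← exp_add, ← exp_add]; ring_nf
    rw [hshift, hP, hPδ]
    field_simp
  have hfactor : 0 < (1 - exp (-η * δ)) * exp (η * (δ - C * δ)) / η := by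
    have hdecay : exp (-η * δ) < 1 := exp_lt_one_iff.2 (by nlinarith)
    exact div_pos (mul_pos (sub_pos.2 hdecay) (exp_pos _)) hη
  have hcriterion : 0 ≤ L ↔ 0 ≤ exp (-η * (P * δ - C * δ)) / η * v + d / 2 := by
    rw [hformula, mul_nonneg_iff_of_pos_left hfactor,
      show -η * (P * δ - C * δ) = -η * (P - C) * δ by ring, add_comm, div_mul_comm]
  refine ⟨hformula, hcriterion, fun vmax hvmax hv hhorizon => hcriterion.2 ?_⟩
  refine exp_neg_mul_div_mul_add_half_nonneg hη hd hvmax hv ((div_le_iff₀' hη).1 ?_)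
  linarith [one_div_mul_eq_div η (log (2 * vmax / (η * d)))]

/-- the computation behind the sufficient condition for recursive
feasibility with the anticipative tail. With `g(τ) = v·min(τ − Pδ, δ)`,
`∫_{Cδ}^{(C+1)δ} e^{η(δ−τ)} (d/2) dτ + ∫_{Pδ}^∞ e^{η(δ−τ)} g(τ) dτ
   = ((1 − e^{−ηδ}) e^{η(δ−Cδ)}/η) (d/2 + (v/η) e^{−η(P−C)δ})`;
consequently the left-hand side is nonnegative iff `(e^{−η(Pδ−Cδ)}/η) v + d/2 ≥ 0`, and
in particular it is nonnegative whenever `|v| ≤ v_max` and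
`Pδ ≥ Cδ + (1/η) log(2 v_max/(η d))`. -/
theorem stmt_17 (η δ d v : ℝ) (hη : 0 < η) (hδ : 0 < δ) (hd : 0 < d)
    (C P : ℕ) (hCP : C < P)
    (L : ℝ)
    (hL : L = (∫ τ in ((C : ℝ) * δ)..(((C : ℝ) + 1) * δ), Real.exp (η * (δ - τ)) * (d / 2))
        + ∫ τ in Set.Ioi ((P : ℝ) * δ),
            Real.exp (η * (δ - τ)) * (v * min (τ - (P : ℝ) * δ) δ)) :
    L = (1 - Real.exp (-η * δ)) * Real.exp (η * (δ - (C : ℝ) * δ)) / η *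
        (d / 2 + v / η * Real.exp (-η * ((P : ℝ) - (C : ℝ)) * δ)) ∧
    (0 ≤ L ↔ 0 ≤ Real.exp (-η * ((P : ℝ) * δ - (C : ℝ) * δ)) / η * v + d / 2) ∧
    (∀ vmax : ℝ, 0 < vmax → |v| ≤ vmax →
      (C : ℝ) * δ + 1 / η * Real.log (2 * vmax / (η * d)) ≤ (P : ℝ) * δ → 0 ≤ L) :=
  stmt_17_general η δ d v hη hδ hd C P L hL
end

section
/- Let η > 0 and γ ≥ 0, and let x_z : ℝ → ℝ be differentiable with |x_z'(t)| ≤ γ for all t. Let x_s : [t₀, ∞) → ℝ be differentiable and satisfy the stable LIP subsystem dynamics x_s'(t) = −η(x_s(t) − x_z(t)) for all t ≥ t₀. Then x_s − x_z is bounded on [t₀, ∞); more precisely, |x_s(t) − x_z(t)| ≤ max(|x_s(t₀) − x_z(t₀)|, γ/η) for all t ≥ t₀. -/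
open Real

/-!
With `e := x_s − x_z` the dynamics read `e' = −η e − x_z'`, a stable linear equation driven by
an input of size at most `γ`. With `c := max e(t₀) (γ/η)` the integrating factor makes
`t ↦ exp (η t) (e t − c)` nonincreasing, since its derivative is `exp (η t) (−x_z' − η c) ≤ 0`;
so `e` stays below `c`, and the same argument applied to `−e` bounds it from below.
-/

theorem le_max_of_hasDerivAt_neg_mul_add {f u : ℝ → ℝ} {η γ t₀ : ℝ} (hη : 0 < η)
    (hf : ∀ t, t₀ ≤ t → HasDerivAt f (-η * f t + u t) t) (hu : ∀ t, t₀ ≤ t → u t ≤ γ) :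
    ∀ t, t₀ ≤ t → f t ≤ max (f t₀) (γ / η) := by
  set c := max (f t₀) (γ / η)
  have hγc : γ ≤ η * c := (div_le_iff₀' hη).mp (le_max_right _ _)
  have hg : ∀ t, t₀ ≤ t → HasDerivAt (fun s ↦ exp (η * s) * (f s - c))
      (exp (η * t) * (u t - η * c)) t := by
    intro t ht
    have hexp : HasDerivAt (fun s ↦ exp (η * s)) (exp (η * t) * η) t := by
      simpa using ((hasDerivAt_id t).const_mul η).exp
    exact (hexp.mul ((hf t ht).sub_const c)).congr_deriv (by ring)
  have hanti : AntitoneOn (fun s ↦ exp (η * s) * (f s - c)) (Set.Ici t₀) := by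
    refine antitoneOn_of_hasDerivWithinAt_nonpos (convex_Ici t₀)
      (fun t ht ↦ (hg t ht).continuousAt.continuousWithinAt)
      (fun t ht ↦ (hg t (le_of_lt (by simpa using ht))).hasDerivWithinAt) ?_
    intro t ht
    exact mul_nonpos_of_nonneg_of_nonpos (exp_pos _).le
      (by linarith [hu t (le_of_lt (by simpa using ht))])
  intro t ht
  have hdecay : exp (η * t) * (f t - c) ≤ exp (η * t₀) * (f t₀ - c) :=
    hanti Set.self_mem_Ici ht ht
  have hstart : exp (η * t₀) * (f t₀ - c) ≤ 0 :=
    mul_nonpos_of_nonneg_of_nonpos (exp_pos _).le (sub_nonpos.mpr (le_max_left _ _))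
  have hbelow : f t - c ≤ 0 :=
    (mul_nonpos_iff_pos_imp_nonpos.mp (hdecay.trans hstart)).1 (exp_pos _)
  linarith

theorem abs_le_max_of_hasDerivAt_neg_mul_add {f u : ℝ → ℝ} {η γ t₀ : ℝ} (hη : 0 < η)
    (hf : ∀ t, t₀ ≤ t → HasDerivAt f (-η * f t + u t) t) (hu : ∀ t, t₀ ≤ t → |u t| ≤ γ) :
    ∀ t, t₀ ≤ t → |f t| ≤ max |f t₀| (γ / η) := by
  intro t ht
  have hupper := le_max_of_hasDerivAt_neg_mul_add hη hf (fun s hs ↦ (abs_le.mp (hu s hs)).2) t ht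
  have hlower := le_max_of_hasDerivAt_neg_mul_add (f := -f) (u := -u) (γ := γ) hη
    (fun s hs ↦ (hf s hs).neg.congr_deriv (by simp only [Pi.neg_apply]; ring))
    (fun s hs ↦ neg_le.mp (abs_le.mp (hu s hs)).1) t ht
  simp only [Pi.neg_apply] at hlower
  refine abs_le.mpr ⟨?_, ?_⟩
  · linarith [neg_abs_le (f t₀), max_le_max_right (γ / η) (neg_le_abs (f t₀))]
  · linarith [max_le_max_right (γ / η) (le_abs_self (f t₀))]

theorem stmt_18_general (η γ t₀ : ℝ) (hη : 0 < η)
    (xz xs : ℝ → ℝ)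
    (hxz : Differentiable ℝ xz) (hxz' : ∀ t, |deriv xz t| ≤ γ)
    (hode : ∀ t, t₀ ≤ t → HasDerivAt xs (-η * (xs t - xz t)) t) :
    ∀ t, t₀ ≤ t → |xs t - xz t| ≤ max |xs t₀ - xz t₀| (γ / η) := by
  have herror : ∀ t, t₀ ≤ t →
      HasDerivAt (xs - xz) (-η * (xs - xz) t + -deriv xz t) t := fun t ht ↦ by
    simpa [sub_eq_add_neg] using (hode t ht).sub (hxz t).hasDerivAt
  exact abs_le_max_of_hasDerivAt_neg_mul_add hη herror (fun t _ ↦ by simpa using hxz' t)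

/-- BIBO stability of the stable LIP subsystem. If
`x_s' = −η(x_s − x_z)` for `t ≥ t₀` and `|x_z'| ≤ γ`, then
`|x_s(t) − x_z(t)| ≤ max(|x_s(t₀) − x_z(t₀)|, γ/η)` for all `t ≥ t₀`. -/
theorem stmt_18 (η γ t₀ : ℝ) (hη : 0 < η) (hγ : 0 ≤ γ)
    (xz xs : ℝ → ℝ)
    (hxz : Differentiable ℝ xz) (hxz' : ∀ t, |deriv xz t| ≤ γ)
    (hode : ∀ t, t₀ ≤ t → HasDerivAt xs (-η * (xs t - xz t)) t) :
    ∀ t, t₀ ≤ t → |xs t - xz t| ≤ max |xs t₀ - xz t₀| (γ / η) :=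
  stmt_18_general η γ t₀ hη xz xs hxz hxz' hode
end
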